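/- arXiv:2212.01621 — 7 statements merged into one kernel-verified Lean document; each statement's English description precedes it below -/
import Mathlib

section
/- Let X be an ℝ^p-valued random vector and Y = (Y_1,…,Y_q) an ℝ^q-valued random vector with non-degenerate components, all defined on a common probability space. Then 0 ≤ T(Y|X) ≤ 1. -/
/-!
Conditioning contracts variance: by the law of total variance `Var[μ[X|m]] ≤ Var[X]`, and by the
tower property `Var[μ[X|m₁]] ≤ Var[μ[X|m₂]]` for `m₁ ≤ m₂`. Integrating over `y` gives
`ξ(Z|m) ≤ 1` and monotonicity of `ξ(Z|m)` in `m`. Hence every summand of the numerator of `T`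
dominates the corresponding summand of the denominator and is at most `1`, so
`0 ≤ q - ∑ ξ_full ≤ q - ∑ ξ_past` and the quotient lies in `[0, 1]` (also when the denominator
vanishes, as `x / 0 = 0`).
-/

open MeasureTheory ProbabilityTheory

/-- Azadkia–Chatterjee's rank correlation `ξ(Y | m)` of a real random variable `Y`
given a sub-σ-algebra `m`. -/
noncomputable def xiSigma {Ω : Type*} (m : MeasurableSpace Ω) [MeasurableSpace Ω]
    (P : Measure Ω) (Y : Ω → ℝ) : ℝ :=
  (∫ y, variance (P[Set.indicator {ω | y ≤ Y ω} (fun _ => (1 : ℝ)) | m]) P ∂(P.map Y)) /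
  (∫ y, variance (Set.indicator {ω | y ≤ Y ω} (fun _ => (1 : ℝ))) P ∂(P.map Y))

/-- Azadkia–Chatterjee's rank correlation `ξ(Y | X)`: conditioning on the σ-algebra
generated by the random vector `X`. -/
noncomputable def xi {Ω α : Type*} [MeasurableSpace Ω] [MeasurableSpace α]
    (P : Measure Ω) (Y : Ω → ℝ) (X : Ω → α) : ℝ :=
  xiSigma (MeasurableSpace.comap X inferInstance) P Y

/-- The σ-algebra generated by the response variables with index `< i`,
i.e. by `(Y_1, …, Y_{i-1})`; for `i = 0` it is the trivial σ-algebra `⊥`,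
so that `xiSigma (sigmaPast Y 0) P (Y 0) = ξ(Y_1 | ∅) = 0`. -/
def sigmaPast {Ω : Type*} {q : ℕ} (Y : Fin q → Ω → ℝ) (i : Fin q) :
    MeasurableSpace Ω :=
  ⨆ j : Fin q, ⨆ _ : j < i, MeasurableSpace.comap (Y j) inferInstance

/-- The extension `T(Y | X)` of Azadkia–Chatterjee's rank correlation to a vector
`Y = (Y_1, …, Y_q)` of response variables, given the predictor vector `X`:
`T(Y|X) = 1 − (q − ∑_i ξ(Y_i | (X,Y_{i−1},…,Y_1))) / (q − ∑_i ξ(Y_i | (Y_{i−1},…,Y_1)))`. -/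
noncomputable def T {Ω α : Type*} [MeasurableSpace Ω] [MeasurableSpace α]
    (P : Measure Ω) {q : ℕ} (Y : Fin q → Ω → ℝ) (X : Ω → α) : ℝ :=
  1 - ((q : ℝ) - ∑ i, xiSigma (MeasurableSpace.comap X inferInstance ⊔ sigmaPast Y i) P (Y i)) /
      ((q : ℝ) - ∑ i, xiSigma (sigmaPast Y i) P (Y i))

/-- A real random variable is non-degenerate if it is not almost surely constant. -/
def Nondegenerate {Ω : Type*} [MeasurableSpace Ω] (P : Measure Ω) (Y : Ω → ℝ) : Prop :=
  ¬ ∃ c : ℝ, ∀ᵐ ω ∂P, Y ω = c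

section VarianceCondExp

variable {Ω : Type*} {m m₁ m₂ m₀ : MeasurableSpace Ω} {μ : Measure[m₀] Ω} {X : Ω → ℝ}

lemma variance_condExp_le [IsProbabilityMeasure μ] (hm : m ≤ m₀) (hX : MemLp X 2 μ) :
    Var[μ[X | m]; μ] ≤ Var[X; μ] := by
  have hcondVar : 0 ≤ μ[Var[X; μ | m]] :=
    integral_nonneg_of_ae (condExp_nonneg (ae_of_all _ fun ω => sq_nonneg _))
  linarith [integral_condVar_add_variance_condExp hm hX]

lemma variance_condExp_mono [IsProbabilityMeasure μ] (h₁₂ : m₁ ≤ m₂) (h₂ : m₂ ≤ m₀)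
    (hX : MemLp X 2 μ) : Var[μ[X | m₁]; μ] ≤ Var[μ[X | m₂]; μ] := by
  rw [← variance_congr (condExp_condExp_of_le h₁₂ h₂)]
  exact variance_condExp_le (h₁₂.trans h₂) (hX.condExp one_le_two)

end VarianceCondExp

section AntitoneFamily

variable {Ω : Type*} {m₀ : MeasurableSpace Ω} {μ : Measure[m₀] Ω} [IsProbabilityMeasure μ]
  {f : ℝ → Ω → ℝ}

/-- `Var[f y] = μ[(f y)²] - μ[f y]²` is a difference of two antitone functions of `y`. -/
lemma measurable_variance_of_antitone (hf : ∀ y, MemLp (f y) 2 μ) (hf₀ : ∀ y, 0 ≤ᵐ[μ] f y)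
    (hanti : ∀ ⦃a b⦄, a ≤ b → f b ≤ᵐ[μ] f a) : Measurable fun y => Var[f y; μ] := by
  have hmean : Antitone fun y => μ[f y] := fun a b hab =>
    integral_mono_ae ((hf b).integrable one_le_two) ((hf a).integrable one_le_two) (hanti hab)
  have hsq : Antitone fun y => μ[f y ^ 2] := fun a b hab =>
    integral_mono_ae (hf b).integrable_sq (hf a).integrable_sq <| by
      filter_upwards [hf₀ b, hanti hab] with ω h₀ hle
      exact pow_le_pow_left₀ h₀ hle 2
  simp_rw [variance_eq_sub (hf _)]
  exact hsq.measurable.sub (hmean.measurable.pow_const 2)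

lemma integrable_variance_of_antitone (hf : ∀ y, MemLp (f y) 2 μ) (hf₀ : ∀ y, 0 ≤ᵐ[μ] f y)
    (hanti : ∀ ⦃a b⦄, a ≤ b → f b ≤ᵐ[μ] f a) {C : ℝ} (hC : ∀ y, Var[f y; μ] ≤ C)
    (ν : Measure ℝ) [IsFiniteMeasure ν] : Integrable (fun y => Var[f y; μ]) ν :=
  .of_bound (measurable_variance_of_antitone hf hf₀ hanti).aestronglyMeasurable C <|
    ae_of_all _ fun y => (Real.norm_of_nonneg (variance_nonneg _ _)).trans_le (hC y)

end AntitoneFamily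

section Xi

variable {Ω : Type*} {m m₁ m₂ m₀ : MeasurableSpace Ω} {P : Measure[m₀] Ω} {Z : Ω → ℝ}

noncomputable def tailIndicator (Z : Ω → ℝ) (y : ℝ) : Ω → ℝ := {ω | y ≤ Z ω}.indicator fun _ => 1

lemma xiSigma_eq_div : xiSigma m P Z =
    (∫ y, Var[P[tailIndicator Z y | m]; P] ∂P.map Z) / ∫ y, Var[tailIndicator Z y; P] ∂P.map Z :=
  rfl

lemma tailIndicator_mem_Icc (Z : Ω → ℝ) (y : ℝ) (ω : Ω) :
    tailIndicator Z y ω ∈ Set.Icc (0 : ℝ) 1 := by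
  by_cases h : y ≤ Z ω <;> simp [tailIndicator, h]

lemma tailIndicator_antitone (Z : Ω → ℝ) : Antitone (tailIndicator Z) := fun _ _ hab =>
  Set.indicator_le_indicator_of_subset (fun _ hω => hab.trans hω) fun _ => zero_le_one

lemma memLp_tailIndicator [IsFiniteMeasure P] (hZ : Measurable Z) (y : ℝ) :
    MemLp (tailIndicator Z y) 2 P :=
  memLp_indicator_const 2 (measurableSet_le measurable_const hZ) 1 (.inr (measure_ne_top _ _))

lemma integrable_variance_tailIndicator [IsProbabilityMeasure P] (hZ : Measurable Z)
    (ν : Measure ℝ) [IsFiniteMeasure ν] : Integrable (fun y => Var[tailIndicator Z y; P]) ν :=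
  integrable_variance_of_antitone (memLp_tailIndicator hZ)
    (fun y => ae_of_all _ fun ω => (tailIndicator_mem_Icc Z y ω).1)
    (fun _ _ hab => ae_of_all _ (tailIndicator_antitone Z hab))
    (fun y => variance_le_sq_of_bounded (ae_of_all _ (tailIndicator_mem_Icc Z y))
      (memLp_tailIndicator hZ y).aestronglyMeasurable.aemeasurable) ν

lemma integrable_variance_condExp_tailIndicator [IsProbabilityMeasure P] (hm : m ≤ m₀)
    (hZ : Measurable Z) (ν : Measure ℝ) [IsFiniteMeasure ν] :
    Integrable (fun y => Var[P[tailIndicator Z y | m]; P]) ν :=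
  integrable_variance_of_antitone (fun y => (memLp_tailIndicator hZ y).condExp one_le_two)
    (fun y => condExp_nonneg (ae_of_all _ fun ω => (tailIndicator_mem_Icc Z y ω).1))
    (fun a b hab => condExp_mono ((memLp_tailIndicator hZ b).integrable one_le_two)
      ((memLp_tailIndicator hZ a).integrable one_le_two)
      (ae_of_all _ (tailIndicator_antitone Z hab)))
    (fun y => (variance_condExp_le hm (memLp_tailIndicator hZ y)).trans <|
      variance_le_sq_of_bounded (ae_of_all _ (tailIndicator_mem_Icc Z y))
        (memLp_tailIndicator hZ y).aestronglyMeasurable.aemeasurable) ν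

lemma xiSigma_le_one [IsProbabilityMeasure P] (hm : m ≤ m₀) (hZ : Measurable Z) :
    xiSigma m P Z ≤ 1 := by
  have : IsProbabilityMeasure (P.map Z) := Measure.isProbabilityMeasure_map hZ.aemeasurable
  rw [xiSigma_eq_div]
  refine div_le_one_of_le₀ ?_ (integral_nonneg fun y => variance_nonneg _ _)
  exact integral_mono_of_nonneg (ae_of_all _ fun y => variance_nonneg _ _)
    (integrable_variance_tailIndicator hZ _)
    (ae_of_all _ fun y => variance_condExp_le hm (memLp_tailIndicator hZ y))

lemma xiSigma_mono [IsProbabilityMeasure P] (h₁₂ : m₁ ≤ m₂) (h₂ : m₂ ≤ m₀) (hZ : Measurable Z) :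
    xiSigma m₁ P Z ≤ xiSigma m₂ P Z := by
  have : IsProbabilityMeasure (P.map Z) := Measure.isProbabilityMeasure_map hZ.aemeasurable
  rw [xiSigma_eq_div, xiSigma_eq_div]
  refine div_le_div_of_nonneg_right ?_ (integral_nonneg fun y => variance_nonneg _ _)
  exact integral_mono_of_nonneg (ae_of_all _ fun y => variance_nonneg _ _)
    (integrable_variance_condExp_tailIndicator h₂ hZ _)
    (ae_of_all _ fun y => variance_condExp_mono h₁₂ h₂ (memLp_tailIndicator hZ y))

end Xi

lemma sigmaPast_le {Ω : Type*} {m₀ : MeasurableSpace Ω} {q : ℕ} {Y : Fin q → Ω → ℝ}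
    (hY : ∀ i, Measurable (Y i)) (i : Fin q) : sigmaPast Y i ≤ m₀ :=
  iSup₂_le fun j _ => (hY j).comap_le

lemma one_sub_div_sub_sum_mem_Icc {q : ℕ} {a b : Fin q → ℝ} (hab : ∀ i, a i ≤ b i)
    (hb : ∀ i, b i ≤ 1) :
    0 ≤ 1 - ((q : ℝ) - ∑ i, b i) / ((q : ℝ) - ∑ i, a i) ∧
      1 - ((q : ℝ) - ∑ i, b i) / ((q : ℝ) - ∑ i, a i) ≤ 1 := by
  have hbq : ∑ i, b i ≤ q := (Finset.sum_le_sum fun i _ => hb i).trans_eq (by simp)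
  have hsum : ∑ i, a i ≤ ∑ i, b i := Finset.sum_le_sum fun i _ => hab i
  have hnum : 0 ≤ (q : ℝ) - ∑ i, b i := sub_nonneg.2 hbq
  have hden : (q : ℝ) - ∑ i, b i ≤ q - ∑ i, a i := sub_le_sub_left hsum _
  exact ⟨sub_nonneg.2 (div_le_one_of_le₀ hden (hnum.trans hden)),
    sub_le_self _ (div_nonneg hnum (hnum.trans hden))⟩

theorem T_mem_unit_interval_general
    {Ω : Type*} [MeasurableSpace Ω] (P : Measure Ω) [IsProbabilityMeasure P]
    {p q : ℕ} (X : Ω → (Fin p → ℝ)) (Y : Fin q → Ω → ℝ)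
    (hX : Measurable X) (hY : ∀ i, Measurable (Y i)) :
    0 ≤ T P Y X ∧ T P Y X ≤ 1 :=
  have hfull (i : Fin q) : MeasurableSpace.comap X inferInstance ⊔ sigmaPast Y i ≤ ‹_› :=
    sup_le hX.comap_le (sigmaPast_le hY i)
  one_sub_div_sub_sum_mem_Icc (fun i => xiSigma_mono le_sup_right (hfull i) (hY i))
    fun i => xiSigma_le_one (hfull i) (hY i)

theorem T_mem_unit_interval
    {Ω : Type*} [MeasurableSpace Ω] (P : Measure Ω) [IsProbabilityMeasure P]
    {p q : ℕ} (X : Ω → (Fin p → ℝ)) (Y : Fin q → Ω → ℝ)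
    (hX : Measurable X) (hY : ∀ i, Measurable (Y i))
    (hnd : ∀ i, Nondegenerate P (Y i)) :
    0 ≤ T P Y X ∧ T P Y X ≤ 1 :=
  T_mem_unit_interval_general P X Y hX hY
end

section
/- Self-equitability: let X be an ℝ^p-valued random vector, Y = (Y_1,…,Y_q) an ℝ^q-valued random vector with non-degenerate components, all defined on a common probability space, and let h : ℝ^p → ℝ^r be a measurable function such that Y and X are conditionally independent given h(X). Then T(Y|h(X)) = T(Y|X). -/
open MeasureTheory ProbabilityTheory

/-! Only the numerators `ξ(Y_i | (X, Y_{<i}))` of `T` involve the predictor, so it suffices that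
`P(Y_i ≥ y | h(X), Y_{<i}) = P(Y_i ≥ y | X, Y_{<i})` almost surely. This holds for any
σ-algebras with `𝒴 ⫫ 𝒳 | 𝒢`, `𝒢 ≤ 𝒳` and `𝒮 ≤ 𝒴`: for `A ∈ 𝒴`, `P(A | 𝒳 ∨ 𝒮) = P(A | 𝒢 ∨ 𝒮)`.
Both sides are compared on the π-system of sets `B ∩ C` with `B ∈ 𝒳`, `C ∈ 𝒮`; the computation
uses first that `P(B | 𝒢 ∨ 𝒮) = P(B | 𝒢)` (conditioning on part of `𝒴` tells nothing more about
`𝒳`), and then the product formula for `P(C ∩ A ∩ B | 𝒢)`. -/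

open MeasurableSpace

section SupGenerators

variable {Ω : Type*}

lemma MeasurableSpace.sup_eq_generateFrom_image2_inter (m₁ m₂ : MeasurableSpace Ω) :
    m₁ ⊔ m₂ = generateFrom
      (Set.image2 (· ∩ ·) {s | MeasurableSet[m₁] s} {t | MeasurableSet[m₂] t}) := by
  refine le_antisymm (sup_le ?_ ?_) (generateFrom_le ?_)
  · exact fun s hs => measurableSet_generateFrom ⟨s, hs, Set.univ, .univ, Set.inter_univ s⟩
  · exact fun t ht => measurableSet_generateFrom ⟨Set.univ, .univ, t, ht, Set.univ_inter t⟩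
  · rintro _ ⟨s, hs, t, ht, rfl⟩
    exact (le_sup_left (b := m₂) s hs).inter (le_sup_right (a := m₁) t ht)

lemma MeasurableSpace.isPiSystem_image2_inter (m₁ m₂ : MeasurableSpace Ω) :
    IsPiSystem (Set.image2 (· ∩ ·) {s | MeasurableSet[m₁] s} {t | MeasurableSet[m₂] t}) := by
  rintro _ ⟨s₁, hs₁, t₁, ht₁, rfl⟩ _ ⟨s₂, hs₂, t₂, ht₂, rfl⟩ -
  exact ⟨s₁ ∩ s₂, hs₁.inter hs₂, t₁ ∩ t₂, ht₁.inter ht₂, Set.inter_inter_inter_comm ..⟩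

end SupGenerators

section SetIntegral

variable {Ω E : Type*} {mΩ : MeasurableSpace Ω} {μ : Measure Ω}
  [NormedAddCommGroup E] [NormedSpace ℝ E]

lemma setIntegral_eq_of_forall_setIntegral_inter_eq {m₁ m₂ : MeasurableSpace Ω}
    (hm₁ : m₁ ≤ mΩ) (hm₂ : m₂ ≤ mΩ) {f g : Ω → E} (hf : Integrable f μ) (hg : Integrable g μ)
    (h : ∀ s t, MeasurableSet[m₁] s → MeasurableSet[m₂] t →
      ∫ x in s ∩ t, f x ∂μ = ∫ x in s ∩ t, g x ∂μ)
    {s : Set Ω} (hs : MeasurableSet[m₁ ⊔ m₂] s) :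
    ∫ x in s, f x ∂μ = ∫ x in s, g x ∂μ := by
  have hle : m₁ ⊔ m₂ ≤ mΩ := sup_le hm₁ hm₂
  have huniv : ∫ x, f x ∂μ = ∫ x, g x ∂μ := by
    simpa using h Set.univ Set.univ .univ .univ
  induction s, hs using induction_on_inter (sup_eq_generateFrom_image2_inter m₁ m₂)
      (isPiSystem_image2_inter m₁ m₂) with
  | empty => simp
  | basic _ hst =>
    obtain ⟨s, hs, t, ht, rfl⟩ := hst
    exact h s t hs ht
  | compl t ht ih =>
    rw [setIntegral_compl (hle t ht) hf, setIntegral_compl (hle t ht) hg, huniv, ih]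
  | iUnion F hF hFm ih =>
    rw [integral_iUnion (fun i => hle _ (hFm i)) hF hf.integrableOn,
      integral_iUnion (fun i => hle _ (hFm i)) hF hg.integrableOn]
    exact tsum_congr ih

lemma ae_eq_condExp_sup_of_forall_setIntegral_inter_eq [CompleteSpace E]
    {m₁ m₂ : MeasurableSpace Ω} (hm₁ : m₁ ≤ mΩ) (hm₂ : m₂ ≤ mΩ)
    [SigmaFinite (μ.trim (sup_le hm₁ hm₂))] {f g : Ω → E}
    (hf : Integrable f μ) (hg : Integrable g μ) (hgm : AEStronglyMeasurable[m₁ ⊔ m₂] g μ)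
    (h : ∀ s t, MeasurableSet[m₁] s → MeasurableSet[m₂] t →
      ∫ x in s ∩ t, g x ∂μ = ∫ x in s ∩ t, f x ∂μ) :
    g =ᵐ[μ] μ[f | m₁ ⊔ m₂] :=
  ae_eq_condExp_of_forall_setIntegral_eq (sup_le hm₁ hm₂) hf (fun _ _ _ => hg.integrableOn)
    (fun _ hs _ => setIntegral_eq_of_forall_setIntegral_inter_eq hm₁ hm₂ hg hf h hs) hgm

lemma setIntegral_mul_condExp {m : MeasurableSpace Ω} (hm : m ≤ mΩ) [SigmaFinite (μ.trim hm)]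
    {f g : Ω → ℝ} {c : ℝ} (hg : StronglyMeasurable[m] g) (hg_bdd : ∀ᵐ x ∂μ, ‖g x‖ ≤ c)
    (hf : Integrable f μ) {s : Set Ω} (hs : MeasurableSet[m] s) :
    ∫ x in s, g x * μ[f | m] x ∂μ = ∫ x in s, g x * f x ∂μ := by
  have hgf : Integrable (g * f) μ := hf.bdd_mul (hg.mono hm).aestronglyMeasurable hg_bdd
  refine (setIntegral_congr_ae (hm s hs) ?_).trans (setIntegral_condExp hm hgf hs)
  exact (condExp_mul_of_stronglyMeasurable_left hg hgf hf).mono fun x hx _ => hx.symm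

lemma setIntegral_mul_indicator_one {t : Set Ω} (ht : MeasurableSet t) (g : Ω → ℝ) (s : Set Ω) :
    ∫ x in s, g x * t.indicator (fun _ => (1 : ℝ)) x ∂μ = ∫ x in s ∩ t, g x ∂μ := by
  simp_rw [← Set.indicator_mul_right, mul_one]
  exact setIntegral_indicator ht

lemma setIntegral_indicator_one {t : Set Ω} (ht : MeasurableSet t) (s : Set Ω) :
    ∫ x in s, t.indicator (fun _ => (1 : ℝ)) x ∂μ = μ.real (s ∩ t) := by
  rw [setIntegral_indicator ht, setIntegral_const, smul_eq_mul, mul_one]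

lemma ae_norm_condExp_indicator_le_one {m : MeasurableSpace Ω} (s : Set Ω) :
    ∀ᵐ x ∂μ, ‖(μ⟦s | m⟧) x‖ ≤ 1 := by
  refine ae_bdd_abs_condExp_of_ae_bdd_abs (ae_of_all _ fun x => ?_)
  by_cases hx : x ∈ s <;> simp [hx]

end SetIntegral

namespace ProbabilityTheory.CondIndep

variable {Ω : Type*} {mΩ : MeasurableSpace Ω} [StandardBorelSpace Ω] {μ : Measure Ω}
  [IsFiniteMeasure μ] {m' m₁ m₂ : MeasurableSpace Ω} {hm' : m' ≤ mΩ}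

lemma setIntegral_condExp_indicator (hCI : CondIndep m' m₁ m₂ hm' μ) (hm₁ : m₁ ≤ mΩ)
    (hm₂ : m₂ ≤ mΩ) {s t₁ t₂ : Set Ω} (hs : MeasurableSet[m'] s) (ht₁ : MeasurableSet[m₁] t₁)
    (ht₂ : MeasurableSet[m₂] t₂) :
    ∫ x in s ∩ t₁, (μ⟦t₂ | m'⟧) x ∂μ = μ.real (s ∩ t₁ ∩ t₂) := by
  have hprod := (condIndep_iff m' m₁ m₂ hm' hm₁ hm₂ μ).1 hCI t₁ t₂ ht₁ ht₂
  calc ∫ x in s ∩ t₁, (μ⟦t₂ | m'⟧) x ∂μ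
      = ∫ x in s, (μ⟦t₂ | m'⟧) x * t₁.indicator (fun _ => 1) x ∂μ :=
        (setIntegral_mul_indicator_one (hm₁ _ ht₁) _ _).symm
    _ = ∫ x in s, (μ⟦t₂ | m'⟧) x * (μ⟦t₁ | m'⟧) x ∂μ :=
        (setIntegral_mul_condExp hm' stronglyMeasurable_condExp
          (ae_norm_condExp_indicator_le_one t₂)
          ((integrable_const 1).indicator (hm₁ _ ht₁)) hs).symm
    _ = ∫ x in s, (μ⟦t₁ ∩ t₂ | m'⟧) x ∂μ :=
        setIntegral_congr_ae (hm' s hs)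
          (hprod.mono fun x hx _ => by rw [hx, Pi.mul_apply, mul_comm])
    _ = μ.real (s ∩ t₁ ∩ t₂) := by
        have ht : MeasurableSet[mΩ] (t₁ ∩ t₂) := (hm₁ _ ht₁).inter (hm₂ _ ht₂)
        rw [setIntegral_condExp hm' ((integrable_const (1 : ℝ)).indicator ht) hs,
          setIntegral_indicator_one ht, Set.inter_assoc]

lemma condExp_indicator_right_sup_eq (hCI : CondIndep m' m₁ m₂ hm' μ) (hm₁ : m₁ ≤ mΩ)
    (hm₂ : m₂ ≤ mΩ) {mS : MeasurableSpace Ω} (hS : mS ≤ m₁) {t : Set Ω}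
    (ht : MeasurableSet[m₂] t) :
    μ⟦t | m' ⊔ mS⟧ =ᵐ[μ] μ⟦t | m'⟧ := by
  refine (ae_eq_condExp_sup_of_forall_setIntegral_inter_eq hm' (hS.trans hm₁)
    ((integrable_const 1).indicator (hm₂ _ ht)) integrable_condExp
    (stronglyMeasurable_condExp.mono le_sup_left).aestronglyMeasurable fun s u hs hu => ?_).symm
  rw [hCI.setIntegral_condExp_indicator hm₁ hm₂ hs (hS _ hu) ht,
    setIntegral_indicator_one (hm₂ _ ht)]

lemma condExp_indicator_left_sup_eq_of_le (hCI : CondIndep m' m₁ m₂ hm' μ) (hm₁ : m₁ ≤ mΩ)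
    (hm₂ : m₂ ≤ mΩ) (hm'₂ : m' ≤ m₂) {mS : MeasurableSpace Ω} (hS : mS ≤ m₁) {t : Set Ω}
    (ht : MeasurableSet[m₁] t) :
    μ⟦t | m₂ ⊔ mS⟧ =ᵐ[μ] μ⟦t | m' ⊔ mS⟧ := by
  have hm'S : m' ⊔ mS ≤ mΩ := sup_le hm' (hS.trans hm₁)
  refine (ae_eq_condExp_sup_of_forall_setIntegral_inter_eq hm₂ (hS.trans hm₁)
    ((integrable_const 1).indicator (hm₁ _ ht)) integrable_condExp
    (stronglyMeasurable_condExp.mono (sup_le_sup_right hm'₂ mS)).aestronglyMeasurable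
    fun u v hu hv => ?_).symm
  have hv' : MeasurableSet[m' ⊔ mS] v := le_sup_right (a := m') v hv
  calc ∫ x in u ∩ v, (μ⟦t | m' ⊔ mS⟧) x ∂μ
      = ∫ x in v, (μ⟦t | m' ⊔ mS⟧) x * u.indicator (fun _ => 1) x ∂μ := by
        rw [setIntegral_mul_indicator_one (hm₂ _ hu), Set.inter_comm]
    _ = ∫ x in v, (μ⟦t | m' ⊔ mS⟧) x * (μ⟦u | m' ⊔ mS⟧) x ∂μ :=
        (setIntegral_mul_condExp hm'S stronglyMeasurable_condExp
          (ae_norm_condExp_indicator_le_one t) ((integrable_const 1).indicator (hm₂ _ hu)) hv').symm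
    _ = ∫ x in v, (μ⟦u | m'⟧) x * (μ⟦t | m' ⊔ mS⟧) x ∂μ :=
        setIntegral_congr_ae (hm'S v hv') ((hCI.condExp_indicator_right_sup_eq hm₁ hm₂ hS hu).mono
          fun x hx _ => by rw [hx, mul_comm])
    _ = ∫ x in v, (μ⟦u | m'⟧) x * t.indicator (fun _ => 1) x ∂μ :=
        setIntegral_mul_condExp hm'S (stronglyMeasurable_condExp.mono le_sup_left)
          (ae_norm_condExp_indicator_le_one u) ((integrable_const 1).indicator (hm₁ _ ht)) hv'
    _ = ∫ x in u ∩ v, t.indicator (fun _ => 1) x ∂μ := by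
        rw [setIntegral_mul_indicator_one (hm₁ _ ht), setIntegral_indicator_one (hm₁ _ ht),
          ← Set.univ_inter (v ∩ t), hCI.setIntegral_condExp_indicator hm₁ hm₂ .univ
            ((hS _ hv).inter ht) hu]
        rw [Set.univ_inter, Set.inter_comm, ← Set.inter_assoc]

end ProbabilityTheory.CondIndep

-- `m₁ m₂` precede the ambient instance so that it is the one `xiSigma` and `Measure Ω` pick up.
lemma xiSigma_congr {Ω : Type*} {m₁ m₂ : MeasurableSpace Ω} [MeasurableSpace Ω] {P : Measure Ω}
    {Y : Ω → ℝ}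
    (h : ∀ y, P⟦{ω | y ≤ Y ω} | m₁⟧ =ᵐ[P] P⟦{ω | y ≤ Y ω} | m₂⟧) :
    xiSigma m₁ P Y = xiSigma m₂ P Y := by
  simp only [xiSigma, variance_congr (h _)]

lemma sigmaPast_le_comap {Ω : Type*} {q : ℕ} (Y : Fin q → Ω → ℝ) (i : Fin q) :
    sigmaPast Y i ≤ MeasurableSpace.comap (fun ω j => Y j ω) inferInstance :=
  iSup₂_le fun j _ => comap_le_iff_le_map.2 fun _ hs =>
    ⟨(fun v => v j) ⁻¹' _, measurable_pi_apply j hs, rfl⟩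

theorem T_self_equitability_general
    {Ω : Type*} [MeasurableSpace Ω] [StandardBorelSpace Ω]
    (P : Measure Ω) [IsProbabilityMeasure P]
    {p q r : ℕ} (X : Ω → (Fin p → ℝ)) (Y : Fin q → Ω → ℝ)
    (h : (Fin p → ℝ) → (Fin r → ℝ))
    (hX : Measurable X) (hY : ∀ i, Measurable (Y i)) (hh : Measurable h)
    (hCI : CondIndepFun (MeasurableSpace.comap (fun ω => h (X ω)) inferInstance)
      (Measurable.comap_le (hh.comp hX)) (fun ω => fun i => Y i ω) X P) :
    T P Y (fun ω => h (X ω)) = T P Y X := by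
  rw [condIndepFun_iff_condIndep] at hCI
  have hhX : MeasurableSpace.comap (fun ω => h (X ω)) inferInstance ≤
      MeasurableSpace.comap X inferInstance := (hh.comp (comap_measurable X)).comap_le
  have hxi : ∀ i,
      xiSigma (MeasurableSpace.comap (fun ω => h (X ω)) inferInstance ⊔ sigmaPast Y i) P (Y i) =
      xiSigma (MeasurableSpace.comap X inferInstance ⊔ sigmaPast Y i) P (Y i) :=
    fun i => xiSigma_congr fun y => (hCI.condExp_indicator_left_sup_eq_of_le
      (measurable_pi_lambda _ hY).comap_le hX.comap_le hhX (sigmaPast_le_comap Y i)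
      ⟨{v | y ≤ v i}, measurableSet_le measurable_const (measurable_pi_apply i), rfl⟩).symm
  simp only [T, hxi]

theorem T_self_equitability
    {Ω : Type*} [MeasurableSpace Ω] [StandardBorelSpace Ω] [Nonempty Ω]
    (P : Measure Ω) [IsProbabilityMeasure P]
    {p q r : ℕ} (X : Ω → (Fin p → ℝ)) (Y : Fin q → Ω → ℝ)
    (h : (Fin p → ℝ) → (Fin r → ℝ))
    (hX : Measurable X) (hY : ∀ i, Measurable (Y i)) (hh : Measurable h)
    (hnd : ∀ i, Nondegenerate P (Y i))
    (hCI : CondIndepFun (MeasurableSpace.comap (fun ω => h (X ω)) inferInstance)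
      (Measurable.comap_le (hh.comp hX)) (fun ω => fun i => Y i ω) X P) :
    T P Y (fun ω => h (X ω)) = T P Y X :=
  T_self_equitability_general P X Y h hX hY hh hCI
end

section
/- Let X be an ℝ^p-valued random vector and Y a real-valued random variable on a common probability space. Then the integral transform ψ_{Y|X}(y,y') := ∫_Ω E[1_{{Y ≤ y}} | X] · E[1_{{Y ≤ y'}} | X] dP, for y, y' ∈ ℝ, is a bivariate distribution function, i.e., there exists a probability measure on ℝ² whose distribution function equals ψ_{Y|X}; namely, ψ_{Y|X} is the distribution function of a bivariate random vector (Y, Y*) such that (X, Y*) and (X, Y) have the same distribution and Y and Y* are conditionally independent given X. -/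
open MeasureTheory ProbabilityTheory

/-- The integral transform `ψ_{Y|X}(y,y') = ∫_Ω E[1_{Y ≤ y} | X] · E[1_{Y ≤ y'} | X] dP`. -/
noncomputable def psi {Ω α : Type*} [MeasurableSpace Ω] [MeasurableSpace α]
    (P : Measure Ω) (Y : Ω → ℝ) (X : Ω → α) (y y' : ℝ) : ℝ :=
  ∫ ω,
    (MeasureTheory.condExp (MeasurableSpace.comap X inferInstance) P
        (Set.indicator {ω' | Y ω' ≤ y} (fun _ => (1 : ℝ))) ω) *
    (MeasureTheory.condExp (MeasurableSpace.comap X inferInstance) P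
        (Set.indicator {ω' | Y ω' ≤ y'} (fun _ => (1 : ℝ))) ω) ∂P

/-! Let `ν` be the law of `X` and `κ` the conditional distribution of `Y` given `X`. Since
`E[1_{Y ≤ y} | X] = κ(X, (-∞, y])` almost surely, `ψ(y, y') = ∫ κ(x, (-∞, y]) κ(x, (-∞, y']) dν(x)`,
the distribution function of the mixture `∫ κ(x) ⊗ κ(x) dν(x)`. That mixture is the law of `(Y, Y*)`
where `X ~ ν` and then `Y, Y*` are drawn independently from `κ(X)`, i.e. of the last two coordinates
of `ν ⊗ (κ × κ)`: both `(X, Y)` and `(X, Y*)` then have law `ν ⊗ κ`. -/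

namespace MeasureTheory.Measure

variable {α β γ : Type*} [MeasurableSpace α] [MeasurableSpace β] [MeasurableSpace γ]
  {ν : Measure α}

lemma map_compProd_prod_fst [SFinite ν] (κ : Kernel α β) [IsSFiniteKernel κ]
    (η : Kernel α γ) [IsMarkovKernel η] :
    (ν ⊗ₘ (κ ×ₖ η)).map (fun z => (z.1, z.2.1)) = ν ⊗ₘ κ := by
  conv_rhs => rw [← Kernel.fst_prod κ η, Kernel.fst_eq, compProd_map measurable_fst]
  rfl

lemma map_compProd_prod_snd [SFinite ν] (κ : Kernel α β) [IsMarkovKernel κ]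
    (η : Kernel α γ) [IsSFiniteKernel η] :
    (ν ⊗ₘ (κ ×ₖ η)).map (fun z => (z.1, z.2.2)) = ν ⊗ₘ η := by
  conv_rhs => rw [← Kernel.snd_prod κ η, Kernel.snd_eq, compProd_map measurable_snd]
  rfl

lemma comp_prod_apply_prod (κ : Kernel α β) [IsSFiniteKernel κ] (η : Kernel α γ)
    [IsSFiniteKernel η] {s : Set β} {t : Set γ} (hs : MeasurableSet s) (ht : MeasurableSet t) :
    ((κ ×ₖ η) ∘ₘ ν) (s ×ˢ t) = ∫⁻ x, κ x s * η x t ∂ν := by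
  simp_rw [bind_apply (hs.prod ht) (κ ×ₖ η).aemeasurable, Kernel.prod_apply_prod]

end MeasureTheory.Measure

lemma ProbabilityTheory.condIndepFun_compProd_prod {α β γ : Type*} [MeasurableSpace α]
    [MeasurableSpace β] [MeasurableSpace γ] [StandardBorelSpace α]
    [StandardBorelSpace β] [Nonempty β] [StandardBorelSpace γ] [Nonempty γ]
    (ν : Measure α) [IsProbabilityMeasure ν] (κ : Kernel α β) [IsMarkovKernel κ]
    (η : Kernel α γ) [IsMarkovKernel η] :
    CondIndepFun (MeasurableSpace.comap Prod.fst inferInstance) measurable_fst.comap_le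
      (fun z => z.2.1) (fun z => z.2.2) (ν ⊗ₘ (κ ×ₖ η)) := by
  set Q := ν ⊗ₘ (κ ×ₖ η)
  have hQ_fst : Q.map Prod.fst = ν := Measure.fst_compProd ν _
  have hκ : condDistrib (fun z => z.2.1) Prod.fst Q =ᵐ[Q.map Prod.fst] κ :=
    condDistrib_ae_eq_of_measure_eq_compProd _ (by fun_prop)
      (by rw [hQ_fst]; exact Measure.map_compProd_prod_fst κ η)
  have hη : condDistrib (fun z => z.2.2) Prod.fst Q =ᵐ[Q.map Prod.fst] η :=
    condDistrib_ae_eq_of_measure_eq_compProd _ (by fun_prop)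
      (by rw [hQ_fst]; exact Measure.map_compProd_prod_snd κ η)
  rw [condIndepFun_iff_map_prod_eq_prod_condDistrib_prod_condDistrib (by fun_prop) (by fun_prop)
    measurable_fst, ← Measure.compProd_eq_comp_prod]
  calc Q.map (fun z => (z.1, z.2.1, z.2.2)) = Q := Measure.map_id
    _ = Q.map Prod.fst ⊗ₘ (κ ×ₖ η) := by rw [hQ_fst]
    _ = _ := Measure.compProd_congr <| by
        filter_upwards [hκ, hη] with x hκx hηx
        rw [Kernel.prod_apply, Kernel.prod_apply, hκx, hηx]

lemma psi_eq_comp_condDistrib {Ω α : Type*} [MeasurableSpace Ω] [MeasurableSpace α]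
    {P : Measure Ω} [IsFiniteMeasure P] {X : Ω → α} {Y : Ω → ℝ} (hX : Measurable X)
    (hY : Measurable Y) (y y' : ℝ) :
    psi P Y X y y' = (((condDistrib Y X P ×ₖ condDistrib Y X P) ∘ₘ P.map X)
      (Set.Iic y ×ˢ Set.Iic y')).toReal := by
  set κ := condDistrib Y X P
  have hcondExp (b : ℝ) : (fun ω => (κ (X ω)).real (Set.Iic b)) =ᵐ[P]
      P⟦Y ⁻¹' Set.Iic b | MeasurableSpace.comap X inferInstance⟧ :=
    condDistrib_ae_eq_condExp hX hY measurableSet_Iic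
  have hκ_meas : Measurable fun x => κ x (Set.Iic y) * κ x (Set.Iic y') :=
    (κ.measurable_coe measurableSet_Iic).mul (κ.measurable_coe measurableSet_Iic)
  calc psi P Y X y y'
      = ∫ ω, (κ (X ω)).real (Set.Iic y) * (κ (X ω)).real (Set.Iic y') ∂P := by
        refine integral_congr_ae ?_
        filter_upwards [hcondExp y, hcondExp y'] with ω hy hy'
        rw [hy, hy']
        rfl
    _ = ∫ x, (κ x (Set.Iic y) * κ x (Set.Iic y')).toReal ∂P.map X := by
        rw [integral_map hX.aemeasurable hκ_meas.ennreal_toReal.aestronglyMeasurable]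
        simp [measureReal_def]
    _ = _ := by
        rw [integral_toReal hκ_meas.aemeasurable (ae_of_all _ fun x => by finiteness),
          Measure.comp_prod_apply_prod κ κ measurableSet_Iic measurableSet_Iic]

theorem psi_is_bivariate_distribution_function
    {Ω : Type*} [MeasurableSpace Ω] (P : Measure Ω) [IsProbabilityMeasure P]
    {p : ℕ} (X : Ω → (Fin p → ℝ)) (Y : Ω → ℝ)
    (hX : Measurable X) (hY : Measurable Y) :
    -- ψ_{Y|X} is the distribution function of a probability measure μ on ℝ²; namely, μ is
    -- the law of a bivariate random vector (Y, Y*) — realized as the last two coordinates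
    -- of a probability measure `Q` on ℝ^p × ℝ × ℝ — such that (X, Y*) and (X, Y) have the
    -- same distribution and Y and Y* are conditionally independent given X.
    ∃ μ : Measure (ℝ × ℝ), IsProbabilityMeasure μ ∧
      (∀ y y' : ℝ, psi P Y X y y' = (μ (Set.Iic y ×ˢ Set.Iic y')).toReal) ∧
      ∃ (Q : Measure ((Fin p → ℝ) × ℝ × ℝ)) (_ : IsProbabilityMeasure Q),
        Q.map (fun z => z.2) = μ ∧
        Q.map (fun z => (z.1, z.2.1)) = P.map (fun ω => (X ω, Y ω)) ∧
        Q.map (fun z => (z.1, z.2.2)) = P.map (fun ω => (X ω, Y ω)) ∧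
        CondIndepFun (MeasurableSpace.comap Prod.fst inferInstance) measurable_fst.comap_le
          (fun z => z.2.1) (fun z => z.2.2) Q := by
  set ν := P.map X
  set κ := condDistrib Y X P
  have : IsProbabilityMeasure ν := Measure.isProbabilityMeasure_map hX.aemeasurable
  have hν_κ : ν ⊗ₘ κ = P.map (fun ω => (X ω, Y ω)) := compProd_map_condDistrib hY.aemeasurable
  refine ⟨(κ ×ₖ κ) ∘ₘ ν, inferInstance, psi_eq_comp_condDistrib hX hY, ν ⊗ₘ (κ ×ₖ κ),
    inferInstance, Measure.snd_compProd ν _, ?_, ?_, condIndepFun_compProd_prod ν κ κ⟩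
  · rw [Measure.map_compProd_prod_fst, hν_κ]
  · rw [Measure.map_compProd_prod_snd, hν_κ]
end

section
/- Dimension reduction principle: let X be an ℝ^p-valued random vector and Y a non-degenerate real-valued random variable on a common probability space. Then ξ(Y|X) = a · ∫_ℝ lim_{t↑y} ψ_{Y|X}(t,t) dP^Y(y) − b, where ψ_{Y|X}(y,y') := ∫_Ω E[1_{{Y ≤ y}} | X] · E[1_{{Y ≤ y'}} | X] dP, a := (∫_ℝ Var(1_{{Y ≥ y}}) dP^Y(y))^{−1}, and b := a · ∫_ℝ lim_{z↑y} F_Y(z)² dP^Y(y), and a, b are positive constants. -/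
open MeasureTheory ProbabilityTheory

/-- The cumulative distribution function `F_W(w) = P(W ≤ w)` of a real random variable `W`. -/
noncomputable def cdf {Ω : Type*} [MeasurableSpace Ω] (P : Measure Ω) (W : Ω → ℝ) (w : ℝ) : ℝ :=
  (P {ω | W ω ≤ w}).toReal

/-!
As `{Y ≥ y}` is the complement of `{Y < y}`,
`Var E[1{Y ≥ y} | X] = ∫ E[1{Y < y} | X]² dP - P(Y < y)²`, and the two terms on the right are the
left limits at `y` of `ψ(t, t)` and of `F_Y(t)²`: when `A ⊆ B`, the integrals of `E[1_A | X]²` and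
`E[1_B | X]²` differ by at most `2 P(B \ A)`, and `P(Y ≤ t) ↑ P(Y < y)` as `t ↑ y`.

For the signs of `a` and `b`: a non-degenerate `Y` has a point `q` with `0 < F_Y(q) < 1`. On
`(q, ∞)`, a set of positive `P^Y`-measure, `P(Y < y) ≥ F_Y(q) > 0`, and `P(Y ≥ y) > 0` except on
a `P^Y`-null set.
-/

open Set Filter Topology Function

lemma integral_sq_sub_integral_sq_mem_Icc {α : Type*} {mα : MeasurableSpace α} {ν : Measure α}
    [IsFiniteMeasure ν] {f g : α → ℝ} (hf : Integrable f ν) (hg : Integrable g ν)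
    (hf0 : ∀ᵐ x ∂ν, 0 ≤ f x) (hfg : f ≤ᵐ[ν] g) (hg1 : ∀ᵐ x ∂ν, g x ≤ 1) :
    ∫ x, g x ^ 2 ∂ν - ∫ x, f x ^ 2 ∂ν ∈ Icc 0 (2 * (∫ x, g x ∂ν - ∫ x, f x ∂ν)) := by
  have h : ∀ᵐ x ∂ν, 0 ≤ f x ∧ f x ≤ g x ∧ g x ≤ 1 := by
    filter_upwards [hf0, hfg, hg1] with x h0 h1 h2 using ⟨h0, h1, h2⟩
  have hf_sq : Integrable (fun x => f x ^ 2) ν := .of_bound (hf.1.pow 2) 1 <| by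
    filter_upwards [h] with x ⟨h0, h1, h2⟩
    rw [Real.norm_eq_abs, abs_of_nonneg (by positivity)]
    nlinarith
  have hg_sq : Integrable (fun x => g x ^ 2) ν := .of_bound (hg.1.pow 2) 1 <| by
    filter_upwards [h] with x ⟨h0, h1, h2⟩
    rw [Real.norm_eq_abs, abs_of_nonneg (by positivity)]
    nlinarith
  rw [← integral_sub hg_sq hf_sq, ← integral_sub hg hf, ← integral_const_mul]
  constructor
  · refine integral_nonneg_of_ae ?_
    filter_upwards [h] with x ⟨h0, h1, h2⟩
    simp only [Pi.zero_apply, sub_nonneg]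
    nlinarith
  · refine integral_mono_ae (hg_sq.sub hf_sq) ((hg.sub hf).const_mul 2) ?_
    filter_upwards [h] with x ⟨h0, h1, h2⟩
    nlinarith

lemma Monotone.integrable_of_norm_le {ν : Measure ℝ} [IsFiniteMeasure ν] {f : ℝ → ℝ}
    (hf : Monotone f) {C : ℝ} (hC : ∀ x, ‖f x‖ ≤ C) : Integrable f ν :=
  .of_bound hf.measurable.aestronglyMeasurable C (ae_of_all _ hC)

lemma measure_setOf_measure_Ici_eq_zero (ν : Measure ℝ) : ν {y | ν (Ici y) = 0} = 0 := by
  set N := {y | ν (Ici y) = 0}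
  -- a point of `N` that is not its least element lies above a rational point of `N`
  have hcover : N ⊆ (⋃ q : {q : ℚ // (q : ℝ) ∈ N}, Ici (q : ℝ)) ∪
      ⋃ y : {y // IsLeast N y}, Ici (y : ℝ) := by
    intro y hy
    by_cases hleast : IsLeast N y
    · exact Or.inr (mem_iUnion.2 ⟨⟨y, hleast⟩, mem_Ici.2 le_rfl⟩)
    · obtain ⟨z, hz, hzy⟩ : ∃ z ∈ N, z < y := by
        simpa [IsLeast, hy, lowerBounds] using hleast
      obtain ⟨q, hzq, hqy⟩ := exists_rat_btwn hzy
      exact Or.inl (mem_iUnion.2 ⟨⟨q, measure_mono_null (Ici_subset_Ici.2 hzq.le) hz⟩, hqy.le⟩)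
  have : Subsingleton {y // IsLeast N y} := ⟨fun a b => Subtype.ext (a.2.unique b.2)⟩
  exact measure_mono_null hcover <| measure_union_null
    (measure_iUnion_null fun q => q.2) (measure_iUnion_null fun y => y.2.1)

namespace ProbabilityTheory

variable (ν : Measure ℝ) [IsProbabilityMeasure ν]

lemma leftLim_cdf (x : ℝ) : leftLim (cdf ν) x = ν.real (Iio x) := by
  have h := (cdf ν).measure_Iio (tendsto_cdf_atBot ν) x
  rw [measure_cdf, sub_zero] at h
  rw [measureReal_def, h, ENNReal.toReal_ofReal]
  exact (cdf_nonneg ν (x - 1)).trans ((cdf ν).mono.le_leftLim (by linarith))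

lemma exists_cdf_mem_Ioo (hν : ∀ c, ν {c} ≠ 1) : ∃ q, cdf ν q ∈ Ioo 0 1 := by
  by_contra! h
  have h01 : ∀ q, cdf ν q = 0 ∨ cdf ν q = 1 := fun q => by
    rcases (cdf_nonneg ν q).eq_or_lt with h0 | h0
    · exact Or.inl h0.symm
    · exact Or.inr (by_contra fun h1 => h q ⟨h0, (cdf_le_one ν q).lt_of_ne h1⟩)
  obtain ⟨r, hr⟩ : ∃ r, cdf ν r = 0 :=
    (((tendsto_cdf_atBot ν).eventually (gt_mem_nhds one_pos)).exists).imp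
      fun r hr => (h01 r).resolve_right hr.ne
  obtain ⟨s, hs⟩ : ∃ s, cdf ν s = 1 :=
    (((tendsto_cdf_atTop ν).eventually (lt_mem_nhds one_pos)).exists).imp
      fun s hs => (h01 s).resolve_left hs.ne'
  set S := {q | cdf ν q = 1}
  have hbdd : BddBelow S := ⟨r, fun q (hq : cdf ν q = 1) => le_of_not_gt fun hqr => by
    linarith [(cdf ν).mono hqr.le]⟩
  -- `cdf ν` then jumps from `0` to `1` at `c`, making `c` an atom of mass one
  set c := sInf S
  have hright : ∀ q > c, cdf ν q = 1 := fun q hq => by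
    obtain ⟨s', hs', hs'q⟩ := exists_lt_of_csInf_lt ⟨s, hs⟩ hq
    exact (cdf_le_one ν q).antisymm (hs'.symm.trans_le ((cdf ν).mono hs'q.le))
  have hleft : ∀ q < c, cdf ν q = 0 := fun q hq =>
    (h01 q).resolve_right fun h1 => (csInf_le hbdd h1).not_gt hq
  have hc : cdf ν c = 1 := tendsto_nhds_unique
    (((cdf ν).right_continuous c).mono Ioi_subset_Ici_self) <| tendsto_const_nhds.congr' <|
      eventually_nhdsWithin_of_forall fun q hq => (hright q hq).symm
  have hc' : leftLim (cdf ν) c = 0 := leftLim_eq_of_tendsto <| tendsto_const_nhds.congr' <|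
    eventually_nhdsWithin_of_forall fun q hq => (hleft q hq).symm
  apply hν c
  rw [← measure_cdf ν, StieltjesFunction.measure_singleton, hc, hc']
  simp

lemma measure_Ioi_pos_of_cdf_lt_one {q : ℝ} (hq : cdf ν q < 1) : 0 < ν (Ioi q) := by
  have h : ν.real (Ioi q) = 1 - cdf ν q := by
    rw [cdf_eq_real, ← compl_Iic, probReal_compl_eq_one_sub measurableSet_Iic]
  refine pos_iff_ne_zero.2 fun h0 => ?_
  rw [measureReal_def, h0, ENNReal.toReal_zero] at h
  linarith

lemma cdf_le_measureReal_Iio {q y : ℝ} (h : q < y) : cdf ν q ≤ ν.real (Iio y) := by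
  rw [cdf_eq_real]
  exact measureReal_mono (Iic_subset_Iio.2 h)

variable {ν}

lemma integral_measureReal_Iio_sq_pos (hν : ∀ c, ν {c} ≠ 1) :
    0 < ∫ y, ν.real (Iio y) ^ 2 ∂ν := by
  obtain ⟨q, hq0, hq1⟩ := exists_cdf_mem_Ioo ν hν
  have hmono : Monotone fun y => ν.real (Iio y) ^ 2 := fun s t hst =>
    pow_le_pow_left₀ measureReal_nonneg (measureReal_mono (Iio_subset_Iio hst)) 2
  have hint : Integrable (fun y => ν.real (Iio y) ^ 2) ν := hmono.integrable_of_norm_le fun y => by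
    rw [norm_pow, Real.norm_of_nonneg measureReal_nonneg]
    exact pow_le_one₀ measureReal_nonneg measureReal_le_one
  rw [integral_pos_iff_support_of_nonneg_ae (ae_of_all _ fun _ => sq_nonneg _) hint]
  exact (measure_Ioi_pos_of_cdf_lt_one ν hq1).trans_le <| measure_mono fun y (hy : q < y) =>
    (pow_pos (hq0.trans_le (cdf_le_measureReal_Iio ν hy)) 2).ne'

lemma integral_measureReal_Ici_mul_Iio_pos (hν : ∀ c, ν {c} ≠ 1) :
    0 < ∫ y, ν.real (Ici y) * ν.real (Iio y) ∂ν := by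
  obtain ⟨q, hq0, hq1⟩ := exists_cdf_mem_Ioo ν hν
  have hmeas : Measurable fun y => ν.real (Ici y) * ν.real (Iio y) :=
    (Antitone.measurable fun s t hst => measureReal_mono (Ici_subset_Ici.2 hst)).mul
      (Monotone.measurable fun s t hst => measureReal_mono (Iio_subset_Iio hst))
  have hint : Integrable (fun y => ν.real (Ici y) * ν.real (Iio y)) ν :=
    .of_bound hmeas.aestronglyMeasurable 1 <| ae_of_all _ fun y => by
      rw [norm_mul, Real.norm_of_nonneg measureReal_nonneg, Real.norm_of_nonneg measureReal_nonneg]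
      exact mul_le_one₀ measureReal_le_one measureReal_nonneg measureReal_le_one
  rw [integral_pos_iff_support_of_nonneg_ae
    (ae_of_all _ fun _ => mul_nonneg measureReal_nonneg measureReal_nonneg) hint]
  refine ((measure_Ioi_pos_of_cdf_lt_one ν hq1).trans_eq
    (measure_sdiff_null (measure_setOf_measure_Ici_eq_zero ν)).symm).trans_le (measure_mono ?_)
  rintro y ⟨hy, hy'⟩
  exact (mul_pos (ENNReal.toReal_pos hy' (measure_ne_top ν _))
    (hq0.trans_le (cdf_le_measureReal_Iio ν hy))).ne'

end ProbabilityTheory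

section CondExpIndicator

variable {Ω : Type*} {m mΩ : MeasurableSpace Ω} {μ : Measure Ω} [IsProbabilityMeasure μ]
  {s t : Set Ω}

lemma variance_indicator_one (hs : MeasurableSet s) :
    variance (s.indicator fun _ => (1 : ℝ)) μ = μ.real s * (1 - μ.real s) := by
  have hsq : (s.indicator fun _ => (1 : ℝ)) ^ 2 = s.indicator fun _ => 1 := by
    ext ω; by_cases h : ω ∈ s <;> simp [h]
  have hint : ∫ ω, s.indicator (fun _ => (1 : ℝ)) ω ∂μ = μ.real s := integral_indicator_one hs
  rw [variance_eq_sub ((memLp_const 1).indicator hs), hsq, hint]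
  ring

lemma condExp_indicator_one_mem_Icc (hm : m ≤ mΩ) (hs : MeasurableSet s) :
    ∀ᵐ ω ∂μ, μ[s.indicator (fun _ => (1 : ℝ))|m] ω ∈ Icc 0 1 := by
  have h0 := condExp_nonneg (μ := μ) (m := m) (f := s.indicator fun _ => (1 : ℝ))
    (ae_of_all _ fun ω => indicator_nonneg (fun _ _ => zero_le_one) ω)
  have h1 := condExp_mono (μ := μ) (m := m) ((integrable_const (1 : ℝ)).indicator hs)
    (integrable_const (1 : ℝ))
    (ae_of_all _ fun ω => indicator_le_self' (fun _ _ => zero_le_one) ω)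
  rw [condExp_const hm] at h1
  filter_upwards [h0, h1] with ω h0 h1 using ⟨h0, h1⟩

lemma condExp_indicator_one_mono (hs : MeasurableSet s) (ht : MeasurableSet t) (hst : s ⊆ t) :
    μ[s.indicator (fun _ => (1 : ℝ))|m] ≤ᵐ[μ] μ[t.indicator (fun _ => (1 : ℝ))|m] :=
  condExp_mono ((integrable_const _).indicator hs) ((integrable_const _).indicator ht)
    (ae_of_all _ (indicator_le_indicator_of_subset hst fun _ => zero_le_one))

lemma integral_condExp_indicator_one (hm : m ≤ mΩ) (hs : MeasurableSet s) :
    ∫ ω, μ[s.indicator (fun _ => (1 : ℝ))|m] ω ∂μ = μ.real s := by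
  rw [integral_condExp hm]
  exact integral_indicator_one hs

lemma condExp_indicator_one_compl (hm : m ≤ mΩ) (hs : MeasurableSet s) :
    μ[sᶜ.indicator (fun _ => (1 : ℝ))|m] =ᵐ[μ] fun ω => 1 - μ[s.indicator (fun _ => 1)|m] ω := by
  have hcompl : sᶜ.indicator (fun _ => (1 : ℝ)) = (fun _ => 1) - s.indicator fun _ => 1 := by
    ext ω; by_cases h : ω ∈ s <;> simp [h]
  rw [hcompl]
  filter_upwards [condExp_sub (integrable_const (1 : ℝ)) ((integrable_const 1).indicator hs) m]
    with ω h
  rw [h, Pi.sub_apply, condExp_const hm]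

lemma variance_condExp_indicator_one (hm : m ≤ mΩ) (hs : MeasurableSet s) :
    variance (μ[s.indicator (fun _ => (1 : ℝ))|m]) μ
      = ∫ ω, (μ[s.indicator (fun _ => (1 : ℝ))|m] ω) ^ 2 ∂μ - μ.real s ^ 2 := by
  have hmemLp : MemLp (μ[s.indicator (fun _ => (1 : ℝ))|m]) 2 μ :=
    (((memLp_const (1 : ℝ)).indicator hs).condExp (m := m) (by norm_num))
  rw [variance_eq_sub hmemLp, integral_condExp_indicator_one hm hs]
  simp only [Pi.pow_apply]

lemma variance_condExp_indicator_one_compl (hm : m ≤ mΩ) (hs : MeasurableSet s) :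
    variance (μ[sᶜ.indicator (fun _ => (1 : ℝ))|m]) μ
      = variance (μ[s.indicator (fun _ => (1 : ℝ))|m]) μ := by
  rw [variance_congr (condExp_indicator_one_compl hm hs)]
  exact variance_const_sub (stronglyMeasurable_condExp.mono hm).aestronglyMeasurable 1

lemma integral_condExp_indicator_one_sq_sub_mem_Icc (hm : m ≤ mΩ) (hs : MeasurableSet s)
    (ht : MeasurableSet t) (hst : s ⊆ t) :
    ∫ ω, (μ[t.indicator (fun _ => (1 : ℝ))|m] ω) ^ 2 ∂μ
        - ∫ ω, (μ[s.indicator (fun _ => (1 : ℝ))|m] ω) ^ 2 ∂μ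
      ∈ Icc 0 (2 * (μ.real t - μ.real s)) := by
  rw [← integral_condExp_indicator_one hm ht, ← integral_condExp_indicator_one hm hs]
  exact integral_sq_sub_integral_sq_mem_Icc integrable_condExp integrable_condExp
    ((condExp_indicator_one_mem_Icc hm hs).mono fun _ h => h.1)
    (condExp_indicator_one_mono hs ht hst)
    ((condExp_indicator_one_mem_Icc hm ht).mono fun _ h => h.2)

end CondExpIndicator

section Response

variable {Ω : Type*} {m mΩ : MeasurableSpace Ω} {μ : Measure Ω} [IsProbabilityMeasure μ]
  {Y : Ω → ℝ}

lemma cdf_eq_cdf_map (hY : Measurable Y) : _root_.cdf μ Y = ProbabilityTheory.cdf (μ.map Y) := by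
  have := Measure.isProbabilityMeasure_map (μ := μ) hY.aemeasurable
  ext z
  rw [cdf_eq_real, map_measureReal_apply hY measurableSet_Iic]
  rfl

lemma tendsto_cdf_nhdsLT (hY : Measurable Y) (y : ℝ) :
    Tendsto (_root_.cdf μ Y) (𝓝[<] y) (𝓝 (μ.real {ω | Y ω < y})) := by
  have := Measure.isProbabilityMeasure_map (μ := μ) hY.aemeasurable
  have h := (ProbabilityTheory.cdf (μ.map Y)).mono.tendsto_leftLim y
  rwa [leftLim_cdf, map_measureReal_apply hY measurableSet_Iio, ← cdf_eq_cdf_map hY] at h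

lemma leftLim_cdf_sq (hY : Measurable Y) (y : ℝ) :
    leftLim (fun z => _root_.cdf μ Y z ^ 2) y = μ.real {ω | Y ω < y} ^ 2 :=
  leftLim_eq_of_tendsto ((tendsto_cdf_nhdsLT hY y).pow 2)

lemma tendsto_integral_condExp_indicator_le_sq (hm : m ≤ mΩ) (hY : Measurable Y) (y : ℝ) :
    Tendsto (fun t => ∫ ω, (μ[{ω | Y ω ≤ t}.indicator (fun _ => (1 : ℝ))|m] ω) ^ 2 ∂μ)
      (𝓝[<] y) (𝓝 (∫ ω, (μ[{ω | Y ω < y}.indicator (fun _ => (1 : ℝ))|m] ω) ^ 2 ∂μ)) := by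
  set G := ∫ ω, (μ[{ω | Y ω < y}.indicator (fun _ => (1 : ℝ))|m] ω) ^ 2 ∂μ
  have hbound : ∀ᶠ t in 𝓝[<] y,
      ∫ ω, (μ[{ω | Y ω ≤ t}.indicator (fun _ => (1 : ℝ))|m] ω) ^ 2 ∂μ
        ∈ Icc (G - 2 * (μ.real {ω | Y ω < y} - _root_.cdf μ Y t)) G := by
    filter_upwards [self_mem_nhdsWithin] with t (ht : t < y)
    have h := integral_condExp_indicator_one_sq_sub_mem_Icc (μ := μ) (s := {ω | Y ω ≤ t})
      (t := {ω | Y ω < y}) hm (hY measurableSet_Iic)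
      (hY measurableSet_Iio) fun ω (hω : Y ω ≤ t) => hω.trans_lt ht
    exact ⟨by rw [_root_.cdf, ← measureReal_def]; linarith [h.2], by linarith [h.1]⟩
  have hlower : Tendsto (fun t => G - 2 * (μ.real {ω | Y ω < y} - _root_.cdf μ Y t)) (𝓝[<] y)
      (𝓝 G) := by
    simpa using (tendsto_const_nhds (x := G)).sub <|
      ((tendsto_const_nhds (x := μ.real {ω | Y ω < y})).sub
        (tendsto_cdf_nhdsLT (μ := μ) hY y)).const_mul 2
  exact tendsto_of_tendsto_of_tendsto_of_le_of_le' hlower tendsto_const_nhds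
    (hbound.mono fun _ h => h.1) (hbound.mono fun _ h => h.2)

lemma leftLim_psi_diag {α : Type*} [MeasurableSpace α] {X : Ω → α} (hX : Measurable X)
    (hY : Measurable Y) (y : ℝ) :
    leftLim (fun t => psi μ Y X t t) y = ∫ ω,
      (μ[{ω | Y ω < y}.indicator (fun _ => (1 : ℝ))|MeasurableSpace.comap X inferInstance] ω) ^ 2
        ∂μ := by
  simp only [psi, ← sq]
  exact leftLim_eq_of_tendsto (tendsto_integral_condExp_indicator_le_sq hX.comap_le hY y)

lemma Nondegenerate.map_singleton_ne_one (hnd : Nondegenerate μ Y) (hY : Measurable Y) (c : ℝ) :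
    μ.map Y {c} ≠ 1 := fun h => hnd ⟨c, by
  rw [Measure.map_apply hY (measurableSet_singleton c),
    ← prob_compl_eq_zero_iff (hY (measurableSet_singleton c))] at h
  exact ae_iff.2 h⟩

lemma integral_variance_indicator_le_pos (hY : Measurable Y) (hnd : Nondegenerate μ Y) :
    0 < ∫ y, variance ({ω | y ≤ Y ω}.indicator fun _ => (1 : ℝ)) μ ∂(μ.map Y) := by
  have := Measure.isProbabilityMeasure_map (μ := μ) hY.aemeasurable
  have h : ∀ y, variance ({ω | y ≤ Y ω}.indicator fun _ => (1 : ℝ)) μ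
      = (μ.map Y).real (Ici y) * (μ.map Y).real (Iio y) := fun y => by
    rw [variance_indicator_one (measurableSet_le measurable_const hY),
      map_measureReal_apply hY measurableSet_Ici, map_measureReal_apply hY measurableSet_Iio,
      ← compl_Ici, preimage_compl, probReal_compl_eq_one_sub (hY measurableSet_Ici)]
    rfl
  simp_rw [h]
  exact integral_measureReal_Ici_mul_Iio_pos (hnd.map_singleton_ne_one hY)

lemma integral_leftLim_cdf_sq_pos (hY : Measurable Y) (hnd : Nondegenerate μ Y) :
    0 < ∫ y, leftLim (fun z => _root_.cdf μ Y z ^ 2) y ∂(μ.map Y) := by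
  have := Measure.isProbabilityMeasure_map (μ := μ) hY.aemeasurable
  have h : ∀ y, leftLim (fun z => _root_.cdf μ Y z ^ 2) y = (μ.map Y).real (Iio y) ^ 2 :=
    fun y => by rw [leftLim_cdf_sq hY, map_measureReal_apply hY measurableSet_Iio]; rfl
  simp_rw [h]
  exact integral_measureReal_Iio_sq_pos (hnd.map_singleton_ne_one hY)

lemma integral_variance_condExp_indicator_le (hm : m ≤ mΩ) (hY : Measurable Y) :
    ∫ y, variance (μ[{ω | y ≤ Y ω}.indicator (fun _ => (1 : ℝ))|m]) μ ∂(μ.map Y)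
      = ∫ y, ∫ ω, (μ[{ω | Y ω < y}.indicator (fun _ => (1 : ℝ))|m] ω) ^ 2 ∂μ ∂(μ.map Y)
        - ∫ y, μ.real {ω | Y ω < y} ^ 2 ∂(μ.map Y) := by
  have := Measure.isProbabilityMeasure_map (μ := μ) hY.aemeasurable
  have hvar : ∀ y, variance (μ[{ω | y ≤ Y ω}.indicator (fun _ => (1 : ℝ))|m]) μ
      = ∫ ω, (μ[{ω | Y ω < y}.indicator (fun _ => (1 : ℝ))|m] ω) ^ 2 ∂μ
        - μ.real {ω | Y ω < y} ^ 2 := fun y => by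
    have hs : MeasurableSet {ω | Y ω < y} := hY measurableSet_Iio
    rw [show {ω | y ≤ Y ω} = {ω | Y ω < y}ᶜ by ext; simp,
      variance_condExp_indicator_one_compl hm hs, variance_condExp_indicator_one hm hs]
  have hG : Integrable
      (fun y => ∫ ω, (μ[{ω | Y ω < y}.indicator (fun _ => (1 : ℝ))|m] ω) ^ 2 ∂μ) (μ.map Y) := by
    refine Monotone.integrable_of_norm_le (C := 1) (fun s t hst => ?_) fun y => ?_
    · exact sub_nonneg.1 (integral_condExp_indicator_one_sq_sub_mem_Icc hm (hY measurableSet_Iio)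
        (hY measurableSet_Iio) fun ω (h : Y ω < s) => h.trans_le hst).1
    · refine (norm_integral_le_of_norm_le_const (C := 1) ?_).trans (by simp)
      filter_upwards [condExp_indicator_one_mem_Icc (μ := μ) (s := {ω | Y ω < y}) hm
        (hY measurableSet_Iio)] with ω ⟨h0, h1⟩
      rw [norm_pow, Real.norm_of_nonneg h0]
      exact pow_le_one₀ h0 h1
  have hF : Integrable (fun y => μ.real {ω | Y ω < y} ^ 2) (μ.map Y) := by
    refine Monotone.integrable_of_norm_le (C := 1) (fun s t hst => ?_) fun y => ?_
    · exact pow_le_pow_left₀ measureReal_nonneg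
        (measureReal_mono fun ω (h : Y ω < s) => h.trans_le hst) 2
    · rw [norm_pow, Real.norm_of_nonneg measureReal_nonneg]
      exact pow_le_one₀ measureReal_nonneg measureReal_le_one
  simp_rw [hvar]
  exact integral_sub hG hF

end Response

theorem xi_dimension_reduction_principle
    {Ω : Type*} [MeasurableSpace Ω] (P : Measure Ω) [IsProbabilityMeasure P]
    {p : ℕ} (X : Ω → (Fin p → ℝ)) (Y : Ω → ℝ)
    (hX : Measurable X) (hY : Measurable Y) (hnd : Nondegenerate P Y)
    (a b : ℝ)
    (ha : a = (∫ y, variance (Set.indicator {ω | y ≤ Y ω} (fun _ => (1 : ℝ))) P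
                ∂(P.map Y))⁻¹)
    (hb : b = a * ∫ y, Function.leftLim (fun z => (cdf P Y z) ^ 2) y ∂(P.map Y)) :
    0 < a ∧ 0 < b ∧
      xi P Y X =
        a * (∫ y, Function.leftLim (fun t => psi P Y X t t) y ∂(P.map Y)) - b := by
  have ha_pos : 0 < a := ha ▸ inv_pos.2 (integral_variance_indicator_le_pos hY hnd)
  refine ⟨ha_pos, hb ▸ mul_pos ha_pos (integral_leftLim_cdf_sq_pos hY hnd), ?_⟩
  have hnum : ∫ y, variance (P[{ω | y ≤ Y ω}.indicator (fun _ => (1 : ℝ))|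
        MeasurableSpace.comap X inferInstance]) P ∂(P.map Y)
      = ∫ y, leftLim (fun t => psi P Y X t t) y ∂(P.map Y)
        - ∫ y, leftLim (fun z => cdf P Y z ^ 2) y ∂(P.map Y) := by
    simp_rw [leftLim_psi_diag hX hY, leftLim_cdf_sq hY]
    exact integral_variance_condExp_indicator_le hX.comap_le hY
  rw [xi, xiSigma, hnum, hb, ha]
  ring
end

section
/- Let X be an ℝ^p-valued random vector, Z an ℝ^r-valued random vector, and Y = (Y_1,…,Y_q) an ℝ^q-valued random vector with non-degenerate components, all defined on a common probability space. Then the permutation-invariant version T̄ satisfies the information gain inequality T̄(Y|X) ≤ T̄(Y|(X,Z)), with equality T̄(Y|X) = T̄(Y|(X,Z)) if and only if Y and Z are conditionally independent given X. -/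
open MeasureTheory ProbabilityTheory

/-- The permutation-invariant version `T̄(Y|X) = (1/q!) ∑_{σ ∈ S_q} T(Y_σ | X)`. -/
noncomputable def Tbar {Ω α : Type*} [MeasurableSpace Ω] [MeasurableSpace α]
    (P : Measure Ω) {q : ℕ} (Y : Fin q → Ω → ℝ) (X : Ω → α) : ℝ :=
  (1 / (Nat.factorial q : ℝ)) * ∑ σ : Equiv.Perm (Fin q), T P (fun i => Y (σ i)) X

/-!
For nested σ-algebras `m ≤ m'` and `f ∈ L²`, the law of total variance gives
`Var E[f|m'] - Var E[f|m] = ‖E[f|m'] - E[f|m]‖₂²`. Applied to `f = 1{W ≥ y}` and integrated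
against the law of `W`, this makes `ξ(W | ·)` monotone in the conditioning σ-algebra, with equality
iff `E[1{W ≥ y} | m'] = E[1{W ≥ y} | m]` for a.e. `y`, hence for every `y` by an `L¹`-approximation.
As `ξ(Y_1 | ∅) = 0`, the denominator of `T` is positive, so `T` and `T̄` inherit the monotonicity,
and `T̄(Y|X) = T̄(Y|(X,Z))` iff, for every ordering of the responses, each `Y_i` is
conditionally independent of `Z` given `X` and the preceding responses. By the graphoid rules
(weak union and contraction), this holds for one ordering iff `Y ⊥ Z | X`.
-/

open MeasurableSpace Set Filter
open scoped ENNReal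

section ConditionalVariance

variable {Ω : Type*} {m m' mΩ : MeasurableSpace Ω} {P : Measure Ω} [IsProbabilityMeasure P]
  {f : Ω → ℝ}

lemma variance_condExp_sub_variance_condExp (hmm' : m ≤ m') (hm' : m' ≤ mΩ) (hf : MemLp f 2 P) :
    variance (P[f | m']) P - variance (P[f | m]) P = ∫ ω, (P[f | m'] ω - P[f | m] ω) ^ 2 ∂P := by
  have htower : P[P[f | m'] | m] =ᵐ[P] P[f | m] := condExp_condExp_of_le hmm' hm'
  have htotal := integral_condVar_add_variance_condExp (hmm'.trans hm')
    (hf.condExp (m := m') one_le_two)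
  rw [variance_congr htower, condVar, integral_condExp (hmm'.trans hm')] at htotal
  rw [← htotal, add_sub_cancel_right]
  exact integral_congr_ae (htower.mono fun ω h => by simp [h])

lemma variance_condExp_mono_s15 (hmm' : m ≤ m') (hm' : m' ≤ mΩ) (hf : MemLp f 2 P) :
    variance (P[f | m]) P ≤ variance (P[f | m']) P := by
  have := variance_condExp_sub_variance_condExp hmm' hm' hf
  have : 0 ≤ ∫ ω, (P[f | m'] ω - P[f | m] ω) ^ 2 ∂P := integral_nonneg fun _ => sq_nonneg _
  linarith

lemma variance_condExp_eq_iff (hmm' : m ≤ m') (hm' : m' ≤ mΩ) (hf : MemLp f 2 P) :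
    variance (P[f | m']) P = variance (P[f | m]) P ↔ P[f | m'] =ᵐ[P] P[f | m] := by
  have hint : Integrable (fun ω => (P[f | m'] ω - P[f | m] ω) ^ 2) P :=
    ((hf.condExp one_le_two).sub (hf.condExp one_le_two)).integrable_sq
  rw [← sub_eq_zero, variance_condExp_sub_variance_condExp hmm' hm' hf,
    integral_eq_zero_iff_of_nonneg (fun _ => sq_nonneg _) hint]
  refine eventually_congr (Eventually.of_forall fun ω => ?_)
  simp [sub_eq_zero]

end ConditionalVariance

lemma exists_mem_measure_Ico_lt {μ : Measure ℝ} [IsFiniteMeasure μ] {D : Set ℝ} (hD : μ Dᶜ = 0)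
    {y : ℝ} (hy : μ (Ici y) ≠ 0) {ε : ℝ≥0∞} (hε : 0 < ε) :
    ∃ d ∈ D, y ≤ d ∧ μ (Ico y d) < ε := by
  have hS : (D ∩ Ici y).Nonempty := by
    by_contra h
    exact hy (measure_mono_null (fun x hx hxD => h ⟨x, hxD, hx⟩) hD)
  have hbdd : BddBelow (D ∩ Ici y) := ⟨y, fun x hx => hx.2⟩
  set s := sInf (D ∩ Ici y)
  have hys : y ≤ s := le_csInf hS fun x hx => hx.2
  -- `[y, s)` misses `D`, by the choice of `s`
  have hgap : μ (Ico y s) = 0 :=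
    measure_mono_null (fun x hx hxD => (csInf_le hbdd ⟨hxD, hx.1⟩).not_gt hx.2) hD
  by_cases hsD : s ∈ D
  · exact ⟨s, hsD, hys, hgap ▸ hε⟩
  have hs0 : μ {s} = 0 := measure_mono_null (singleton_subset_iff.2 hsD) hD
  obtain ⟨δ, hδε, hδ : 0 < δ⟩ := (((tendsto_measure_Icc_nhdsWithin_right' μ s).eventually
    (gt_mem_nhds (hs0 ▸ hε))).and self_mem_nhdsWithin).exists
  obtain ⟨d, hdS, hd⟩ := exists_lt_of_csInf_lt hS (lt_add_of_pos_right s hδ)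
  refine ⟨d, hdS.1, hdS.2, ?_⟩
  calc μ (Ico y d) ≤ μ (Ico y s ∪ Icc (s - δ) (s + δ)) := by
        refine measure_mono fun x hx => ?_
        rcases lt_or_ge x s with hxs | hxs
        · exact Or.inl ⟨hx.1, hxs⟩
        · exact Or.inr ⟨by linarith, by linarith [hx.2]⟩
    _ ≤ μ (Ico y s) + μ (Icc (s - δ) (s + δ)) := measure_union_le _ _
    _ < ε := by rwa [hgap, zero_add]

section Indicators

variable {Ω : Type*} {m m' mΩ : MeasurableSpace Ω} {P : Measure Ω}

lemma condExp_ae_eq_of_forall_approx {f : Ω → ℝ} (hf : Integrable f P)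
    (happrox : ∀ ε > 0, ∃ g, Integrable g P ∧ P[g | m'] =ᵐ[P] P[g | m] ∧ ∫ ω, |f ω - g ω| ∂P < ε) :
    P[f | m'] =ᵐ[P] P[f | m] := by
  have hint : Integrable (fun ω => |P[f | m'] ω - P[f | m] ω|) P :=
    (integrable_condExp.sub integrable_condExp).abs
  have hsmall : ∀ ε > 0, ∫ ω, |P[f | m'] ω - P[f | m] ω| ∂P < 2 * ε := by
    intro ε hε
    obtain ⟨g, hg, hgm, hfg⟩ := happrox ε hε
    have hdiff : ∀ n : MeasurableSpace Ω, ∫ ω, |P[f - g | n] ω| ∂P ≤ ∫ ω, |f ω - g ω| ∂P :=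
      fun n => integral_abs_condExp_le _
    have hbound : ∀ᵐ ω ∂P, |P[f | m'] ω - P[f | m] ω| ≤ |P[f - g | m'] ω| + |P[f - g | m] ω| := by
      filter_upwards [condExp_sub hf hg m', condExp_sub hf hg m, hgm] with ω h' h hgω
      rw [h', h, Pi.sub_apply, Pi.sub_apply, hgω]
      calc |P[f | m'] ω - P[f | m] ω|
          = |(P[f | m'] ω - P[g | m] ω) - (P[f | m] ω - P[g | m] ω)| := by ring_nf
        _ ≤ |P[f | m'] ω - P[g | m] ω| + |P[f | m] ω - P[g | m] ω| := abs_sub _ _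
    calc ∫ ω, |P[f | m'] ω - P[f | m] ω| ∂P
        ≤ ∫ ω, (|P[f - g | m'] ω| + |P[f - g | m] ω|) ∂P :=
          integral_mono_ae hint (integrable_condExp.abs.add integrable_condExp.abs) hbound
      _ = ∫ ω, |P[f - g | m'] ω| ∂P + ∫ ω, |P[f - g | m] ω| ∂P :=
          integral_add integrable_condExp.abs integrable_condExp.abs
      _ < 2 * ε := by linarith [hdiff m', hdiff m]
  have hzero : ∫ ω, |P[f | m'] ω - P[f | m] ω| ∂P = 0 :=
    le_antisymm (le_of_forall_pos_lt_add fun ε hε => by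
      linarith [hsmall (ε / 2) (half_pos hε)]) (integral_nonneg fun _ => abs_nonneg _)
  filter_upwards [(integral_eq_zero_iff_of_nonneg (fun _ => abs_nonneg _) hint).1 hzero]
    with ω hω
  exact sub_eq_zero.1 (abs_eq_zero.1 hω)

lemma integral_abs_indicator_sub_indicator {W : Ω → ℝ} (hW : Measurable W) {y d : ℝ} (hyd : y ≤ d) :
    ∫ ω, |{ω | y ≤ W ω}.indicator (fun _ => (1 : ℝ)) ω - {ω | d ≤ W ω}.indicator (fun _ => 1) ω| ∂P
      = P.real (W ⁻¹' Ico y d) := by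
  rw [← integral_indicator_one (hW measurableSet_Ico)]
  refine integral_congr_ae (Eventually.of_forall fun ω => ?_)
  simp only [indicator, mem_preimage, mem_Ico, mem_ofPred_eq, Pi.one_apply]
  split_ifs <;> simp_all <;> linarith

lemma ae_mem_or_ae_notMem_of_indicator_ae_eq_const {μ : Measure Ω} {s : Set Ω} {c : ℝ}
    (h : (s.indicator fun _ => (1 : ℝ)) =ᵐ[μ] fun _ => c) :
    (∀ᵐ ω ∂μ, ω ∈ s) ∨ ∀ᵐ ω ∂μ, ω ∉ s := by
  by_cases hc : c = 1
  · refine .inl (h.mono fun ω hω => ?_)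
    by_contra hs
    simp [hs, hc] at hω
  · refine .inr (h.mono fun ω hω hs => hc ?_)
    simpa [hs] using hω.symm

variable [IsFiniteMeasure P]

lemma memLp_indicator_one {s : Set Ω} (hs : MeasurableSet s) (p : ℝ≥0∞) :
    MemLp (s.indicator fun _ => (1 : ℝ)) p P :=
  (memLp_const 1).indicator hs

lemma condExp_indicator_of_measurableSet {s : Set Ω} (hs : MeasurableSet s) :
    P⟦s | mΩ⟧ = s.indicator fun _ => 1 :=
  condExp_of_stronglyMeasurable le_rfl (stronglyMeasurable_const.indicator hs)
    ((integrable_const 1).indicator hs)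

lemma forall_condExp_indicator_ae_eq_of_ae {W : Ω → ℝ} (hW : Measurable W)
    (h : ∀ᵐ y ∂(P.map W), P⟦{ω | y ≤ W ω} | m'⟧ =ᵐ[P] P⟦{ω | y ≤ W ω} | m⟧) (y : ℝ) :
    P⟦{ω | y ≤ W ω} | m'⟧ =ᵐ[P] P⟦{ω | y ≤ W ω} | m⟧ := by
  refine condExp_ae_eq_of_forall_approx ((integrable_const 1).indicator (hW measurableSet_Ici))
    fun ε hε => ?_
  by_cases h0 : P.map W (Ici y) = 0
  · refine ⟨0, integrable_zero _ _ _, by rw [condExp_zero, condExp_zero], ?_⟩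
    rw [Measure.map_apply hW measurableSet_Ici] at h0
    have hnull : (fun ω => |{ω | y ≤ W ω}.indicator (fun _ => (1 : ℝ)) ω - (0 : Ω → ℝ) ω|)
        =ᵐ[P] 0 :=
      (measure_eq_zero_iff_ae_notMem.1 h0).mono fun ω hω => by
        simp [show ¬y ≤ W ω from hω]
    rwa [integral_congr_ae hnull, Pi.zero_def, integral_zero]
  obtain ⟨d, hd, hyd, hlt⟩ := exists_mem_measure_Ico_lt
    (D := {d | P⟦{ω | d ≤ W ω} | m'⟧ =ᵐ[P] P⟦{ω | d ≤ W ω} | m⟧}) (ae_iff.1 h) h0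
    (ENNReal.ofReal_pos.2 hε)
  refine ⟨{ω | d ≤ W ω}.indicator fun _ => 1, (integrable_const 1).indicator (hW measurableSet_Ici),
    hd, ?_⟩
  rw [integral_abs_indicator_sub_indicator hW hyd]
  rw [Measure.map_apply hW measurableSet_Ico] at hlt
  exact ENNReal.toReal_lt_of_lt_ofReal hlt

end Indicators

section Xi

variable {Ω : Type*} {m m' mΩ : MeasurableSpace Ω} {P : Measure Ω} {W : Ω → ℝ}

/-- The numerator of `xiSigma m P W`; the denominator is the case `m = mΩ`. -/
noncomputable def xiNum (m : MeasurableSpace Ω) {mΩ : MeasurableSpace Ω} (P : Measure Ω)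
    (W : Ω → ℝ) : ℝ :=
  ∫ y, variance (P⟦{ω | y ≤ W ω} | m⟧) P ∂(P.map W)

lemma xiNum_nonneg : 0 ≤ xiNum m P W := integral_nonneg fun _ => variance_nonneg _ _

variable [IsProbabilityMeasure P]

lemma xiSigma_eq_div_s15 (hW : Measurable W) : xiSigma m P W = xiNum m P W / xiNum mΩ P W := by
  have h : ∀ y, P⟦{ω | y ≤ W ω} | mΩ⟧ = {ω | y ≤ W ω}.indicator fun _ => 1 :=
    fun _ => condExp_indicator_of_measurableSet (hW measurableSet_Ici)
  simp only [xiSigma, xiNum, h]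

lemma variance_condExp_indicator_le {s : Set Ω} (hm : m ≤ mΩ) (hs : MeasurableSet s) :
    variance (P⟦s | m⟧) P ≤ 1 / 4 :=
  calc variance (P⟦s | m⟧) P ≤ variance (P⟦s | mΩ⟧) P :=
        variance_condExp_mono_s15 hm le_rfl (memLp_indicator_one hs 2)
    _ = variance (s.indicator fun _ => (1 : ℝ)) P := by
        rw [condExp_indicator_of_measurableSet hs]
    _ ≤ ((1 - 0) / 2) ^ 2 := by
        refine variance_le_sq_of_bounded (Eventually.of_forall fun ω => ?_)
          (measurable_const.indicator hs).aemeasurable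
        by_cases h : ω ∈ s <;> simp [h]
    _ = 1 / 4 := by norm_num

lemma measurable_variance_condExp_indicator (hW : Measurable W) :
    Measurable fun y => variance (P⟦{ω | y ≤ W ω} | m⟧) P := by
  have hs : ∀ y, MeasurableSet {ω | y ≤ W ω} := fun _ => hW measurableSet_Ici
  have hX : ∀ y, MemLp (P⟦{ω | y ≤ W ω} | m⟧) 2 P := fun y =>
    (memLp_indicator_one (hs y) 2).condExp one_le_two
  have hanti : ∀ ⦃y y'⦄, y ≤ y' → P⟦{ω | y' ≤ W ω} | m⟧ ≤ᵐ[P] P⟦{ω | y ≤ W ω} | m⟧ :=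
    fun y y' h => condExp_mono ((integrable_const 1).indicator (hs y'))
      ((integrable_const 1).indicator (hs y))
      (Eventually.of_forall (indicator_le_indicator_of_subset (fun ω hω => h.trans hω)
        fun _ => zero_le_one))
  have hnonneg : ∀ y, 0 ≤ᵐ[P] P⟦{ω | y ≤ W ω} | m⟧ := fun y =>
    condExp_nonneg (Eventually.of_forall (indicator_nonneg fun _ _ => zero_le_one))
  have hmean : Antitone fun y => ∫ ω, (P⟦{ω | y ≤ W ω} | m⟧) ω ∂P := fun y y' h =>
    integral_mono_ae integrable_condExp integrable_condExp (hanti h)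
  have hsq : Antitone fun y => ∫ ω, (P⟦{ω | y ≤ W ω} | m⟧) ω ^ 2 ∂P := fun y y' h =>
    integral_mono_ae (hX y').integrable_sq (hX y).integrable_sq (by
      filter_upwards [hanti h, hnonneg y'] with ω h h0
      exact pow_le_pow_left₀ h0 h 2)
  have hvar : (fun y => variance (P⟦{ω | y ≤ W ω} | m⟧) P) =
      fun y => ∫ ω, (P⟦{ω | y ≤ W ω} | m⟧) ω ^ 2 ∂P - (∫ ω, (P⟦{ω | y ≤ W ω} | m⟧) ω ∂P) ^ 2 :=
    funext fun y => by simp only [variance_eq_sub (hX y), Pi.pow_apply]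
  rw [hvar]
  exact hsq.measurable.sub (hmean.measurable.pow_const 2)

lemma integrable_variance_condExp_indicator (hW : Measurable W) (hm : m ≤ mΩ) :
    Integrable (fun y => variance (P⟦{ω | y ≤ W ω} | m⟧) P) (P.map W) := by
  have := Measure.isProbabilityMeasure_map (μ := P) hW.aemeasurable
  refine .of_bound (measurable_variance_condExp_indicator hW).aestronglyMeasurable (1 / 4)
    (Eventually.of_forall fun y => ?_)
  rw [Real.norm_of_nonneg (variance_nonneg _ _)]
  exact variance_condExp_indicator_le hm (hW measurableSet_Ici)

lemma xiNum_mono (hW : Measurable W) (hmm' : m ≤ m') (hm' : m' ≤ mΩ) :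
    xiNum m P W ≤ xiNum m' P W :=
  integral_mono (integrable_variance_condExp_indicator hW (hmm'.trans hm'))
    (integrable_variance_condExp_indicator hW hm') fun _ =>
      variance_condExp_mono_s15 hmm' hm' (memLp_indicator_one (hW measurableSet_Ici) 2)

lemma xiNum_eq_iff (hW : Measurable W) (hmm' : m ≤ m') (hm' : m' ≤ mΩ) :
    xiNum m' P W = xiNum m P W ↔ ∀ y, P⟦{ω | y ≤ W ω} | m'⟧ =ᵐ[P] P⟦{ω | y ≤ W ω} | m⟧ := by
  have hint' := integrable_variance_condExp_indicator (P := P) hW hm'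
  have hint := integrable_variance_condExp_indicator (P := P) hW (hmm'.trans hm')
  have hf : ∀ y, MemLp ({ω | y ≤ W ω}.indicator fun _ => (1 : ℝ)) 2 P :=
    fun _ => memLp_indicator_one (hW measurableSet_Ici) 2
  have hvar : ∀ y, variance (P⟦{ω | y ≤ W ω} | m'⟧) P - variance (P⟦{ω | y ≤ W ω} | m⟧) P = 0
      ↔ P⟦{ω | y ≤ W ω} | m'⟧ =ᵐ[P] P⟦{ω | y ≤ W ω} | m⟧ :=
    fun y => sub_eq_zero.trans (variance_condExp_eq_iff hmm' hm' (hf y))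
  rw [← sub_eq_zero, xiNum, xiNum, ← integral_sub hint' hint,
    integral_eq_zero_iff_of_nonneg (fun y => sub_nonneg.2 (variance_condExp_mono_s15 hmm' hm' (hf y)))
      (hint'.sub hint)]
  exact ⟨fun h => forall_condExp_indicator_ae_eq_of_ae hW (h.mono fun y hy => (hvar y).1 hy),
    fun h => Eventually.of_forall fun y => (hvar y).2 (h y)⟩

lemma xiNum_bot : xiNum ⊥ P W = 0 := by
  simp [xiNum, condExp_bot, variance_eq_sub (memLp_const _)]

-- If `xiNum mΩ = xiNum ⊥`, every event `{y ≤ W}` is trivial; countably many of them separate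
-- points, so `W` is a.s. constant.
lemma xiNum_pos (hW : Measurable W) (hnd : Nondegenerate P W) : 0 < xiNum mΩ P W := by
  refine (xiNum_bot (P := P) (W := W) ▸ xiNum_mono hW bot_le le_rfl).lt_of_ne fun h => hnd ?_
  have htriv := (xiNum_eq_iff (P := P) hW bot_le le_rfl).1 (h.symm.trans xiNum_bot.symm)
  refine exists_eventuallyEq_const_of_forall_separating
    (fun U : Set ℝ => U ∈ range (Ici : ℝ → Set ℝ)) ?_
  rintro _ ⟨y, rfl⟩
  have hy := htriv y
  rw [condExp_bot, condExp_indicator_of_measurableSet (s := {ω | y ≤ W ω}) (hW measurableSet_Ici)]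
    at hy
  exact ae_mem_or_ae_notMem_of_indicator_ae_eq_const hy

lemma xiSigma_bot (hW : Measurable W) : xiSigma ⊥ P W = 0 := by
  rw [xiSigma_eq_div_s15 hW, xiNum_bot, zero_div]

lemma xiSigma_le_one_s15 (hW : Measurable W) (hm : m ≤ mΩ) :
    xiSigma m P W ≤ 1 := by
  rw [xiSigma_eq_div_s15 hW]
  exact div_le_one_of_le₀ (xiNum_mono hW hm le_rfl) xiNum_nonneg

lemma xiSigma_mono_s15 (hW : Measurable W) (hmm' : m ≤ m') (hm' : m' ≤ mΩ) :
    xiSigma m P W ≤ xiSigma m' P W := by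
  rw [xiSigma_eq_div_s15 hW, xiSigma_eq_div_s15 hW]
  exact div_le_div_of_nonneg_right (xiNum_mono hW hmm' hm') xiNum_nonneg

lemma xiSigma_eq_iff (hW : Measurable W) (hnd : Nondegenerate P W) (hmm' : m ≤ m')
    (hm' : m' ≤ mΩ) :
    xiSigma m' P W = xiSigma m P W ↔
      ∀ y, P⟦{ω | y ≤ W ω} | m'⟧ =ᵐ[P] P⟦{ω | y ≤ W ω} | m⟧ := by
  rw [xiSigma_eq_div_s15 hW, xiSigma_eq_div_s15 hW, div_left_inj' (xiNum_pos hW hnd).ne',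
    xiNum_eq_iff hW hmm' hm']

end Xi

section CondIndep

variable {Ω : Type*} {m m' m'' m₁ m₂ mΩ : MeasurableSpace Ω} {P : Measure Ω} {s t : Set Ω}

lemma setIntegral_sup_eq_of_forall_inter {u v : Ω → ℝ} (h₁ : m₁ ≤ mΩ) (h₂ : m₂ ≤ mΩ)
    (hu : Integrable u P) (hv : Integrable v P)
    (h : ∀ s t, MeasurableSet[m₁] s → MeasurableSet[m₂] t →
      ∫ ω in s ∩ t, u ω ∂P = ∫ ω in s ∩ t, v ω ∂P)
    (hs : MeasurableSet[m₁ ⊔ m₂] s) : ∫ ω in s, u ω ∂P = ∫ ω in s, v ω ∂P := by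
  set p := image2 (· ∩ ·) {s | MeasurableSet[m₁] s} {t | MeasurableSet[m₂] t}
  have hp : IsPiSystem p := by
    rintro _ ⟨s₁, hs₁, t₁, ht₁, rfl⟩ _ ⟨s₂, hs₂, t₂, ht₂, rfl⟩ -
    exact ⟨s₁ ∩ s₂, hs₁.inter hs₂, t₁ ∩ t₂, ht₁.inter ht₂, inter_inter_inter_comm _ _ _ _⟩
  have hgen : m₁ ⊔ m₂ = generateFrom p := by
    refine le_antisymm (sup_le (fun s hs => ?_) (fun t ht => ?_)) (generateFrom_le ?_)
    · exact measurableSet_generateFrom ⟨s, hs, univ, MeasurableSet.univ, inter_univ s⟩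
    · exact measurableSet_generateFrom ⟨univ, MeasurableSet.univ, t, ht, univ_inter t⟩
    · rintro _ ⟨s, hs, t, ht, rfl⟩
      exact (le_sup_left (b := m₂) s hs).inter (le_sup_right (a := m₁) t ht)
  have htotal : ∫ ω, u ω ∂P = ∫ ω, v ω ∂P := by
    simpa using h univ univ MeasurableSet.univ MeasurableSet.univ
  induction s, hs using induction_on_inter hgen hp with
  | empty => simp
  | basic _ hst =>
    obtain ⟨s, hs, t, ht, rfl⟩ := hst
    exact h s t hs ht
  | compl t ht ih =>
    have hu' := integral_add_compl (sup_le h₁ h₂ _ ht) hu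
    have hv' := integral_add_compl (sup_le h₁ h₂ _ ht) hv
    linarith
  | iUnion f hdisj hf ih =>
    have hf' := fun i => sup_le h₁ h₂ _ (hf i)
    rw [integral_iUnion hf' hdisj hu.integrableOn, integral_iUnion hf' hdisj hv.integrableOn]
    exact tsum_congr ih

variable [IsFiniteMeasure P]

lemma condExp_ae_eq_of_le_of_le {g : Ω → ℝ} (hm : m ≤ m') (hm' : m' ≤ m'') (hm'' : m'' ≤ mΩ)
    (h : P[g | m''] =ᵐ[P] P[g | m]) : P[g | m'] =ᵐ[P] P[g | m] :=
  calc P[g | m'] =ᵐ[P] P[P[g | m''] | m'] := (condExp_condExp_of_le hm' hm'').symm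
    _ =ᵐ[P] P[P[g | m] | m'] := condExp_congr_ae h
    _ = P[g | m] := condExp_of_stronglyMeasurable (hm'.trans hm'')
        (stronglyMeasurable_condExp.mono hm) integrable_condExp

lemma condExp_indicator_inter_ae_eq_mul (hmm' : m ≤ m') (hm' : m' ≤ mΩ) (hs : MeasurableSet s)
    (ht : MeasurableSet[m'] t) (h : P⟦s | m'⟧ =ᵐ[P] P⟦s | m⟧) :
    P⟦s ∩ t | m⟧ =ᵐ[P] P⟦s | m⟧ * P⟦t | m⟧ := by
  set χs : Ω → ℝ := s.indicator fun _ => 1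
  set χt : Ω → ℝ := t.indicator fun _ => 1
  have hsi : Integrable χs P := (integrable_const 1).indicator hs
  have ht_sm : StronglyMeasurable[m'] χt := stronglyMeasurable_const.indicator ht
  have hmul : ∀ {g : Ω → ℝ}, Integrable g P → Integrable (χt * g) P := fun hg =>
    hg.bdd_mul (c := 1) (ht_sm.mono hm').aestronglyMeasurable
      (Eventually.of_forall fun ω => by by_cases hω : ω ∈ t <;> simp [χt, hω])
  have hst : (s ∩ t).indicator (fun _ => (1 : ℝ)) = χt * χs := by
    ext ω; by_cases hωs : ω ∈ s <;> by_cases hωt : ω ∈ t <;> simp [χs, χt, hωs, hωt]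
  rw [hst, mul_comm (P⟦s | m⟧)]
  calc P[χt * χs | m] =ᵐ[P] P[P[χt * χs | m'] | m] := (condExp_condExp_of_le hmm' hm').symm
    _ =ᵐ[P] P[χt * P[χs | m'] | m] :=
        condExp_congr_ae (condExp_mul_of_stronglyMeasurable_left ht_sm (hmul hsi) hsi)
    _ =ᵐ[P] P[χt * P[χs | m] | m] := condExp_congr_ae (h.mono fun ω hω => by simp [hω])
    _ =ᵐ[P] P[χt | m] * P[χs | m] :=
        condExp_mul_of_stronglyMeasurable_right stronglyMeasurable_condExp
          (hmul integrable_condExp) ((integrable_const 1).indicator (hm' _ ht))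

variable [StandardBorelSpace Ω]

lemma condIndep_of_condExp_indicator_sup_ae_eq (hm : m ≤ mΩ) (h₁ : m₁ ≤ mΩ) (h₂ : m₂ ≤ mΩ)
    {p : Set (Set Ω)} (hp : IsPiSystem p) (hgen : m₁ = generateFrom p)
    (h : ∀ s ∈ p, P⟦s | m ⊔ m₂⟧ =ᵐ[P] P⟦s | m⟧) : CondIndep m m₁ m₂ hm P := by
  have hpm : ∀ s ∈ p, MeasurableSet s := fun s hs => h₁ _ (hgen ▸ measurableSet_generateFrom hs)
  refine CondIndepSets.condIndep h₁ h₂ hp (@isPiSystem_measurableSet Ω m₂) hgen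
    (@generateFrom_measurableSet Ω m₂).symm ?_
  refine (condIndepSets_iff _ _ _ _ hpm (fun t ht => h₂ _ ht) _).2 fun s t hs ht =>
    condExp_indicator_inter_ae_eq_mul le_sup_left (sup_le hm h₂) (hpm s hs)
      (le_sup_right (a := m) t ht) (h s hs)

lemma CondIndep.condExp_indicator_sup_ae_eq {hm : m ≤ mΩ} (hind : CondIndep m m₁ m₂ hm P)
    (h₁ : m₁ ≤ mΩ) (h₂ : m₂ ≤ mΩ) (hs : MeasurableSet[m₁] s) :
    P⟦s | m ⊔ m₂⟧ =ᵐ[P] P⟦s | m⟧ := by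
  set χs : Ω → ℝ := s.indicator fun _ => 1
  have hsi : Integrable χs P := (integrable_const 1).indicator (h₁ _ hs)
  refine (ae_eq_condExp_of_forall_setIntegral_eq (sup_le hm h₂) hsi
    (fun _ _ _ => integrable_condExp.integrableOn) (fun r hr _ => ?_)
    (stronglyMeasurable_condExp.mono le_sup_left :
      StronglyMeasurable[m ⊔ m₂] (P[χs | m])).aestronglyMeasurable).symm
  refine setIntegral_sup_eq_of_forall_inter hm h₂ integrable_condExp hsi (fun a t ha ht => ?_) hr
  have ht' : MeasurableSet t := h₂ _ ht
  have hti : Integrable (t.indicator fun _ => (1 : ℝ)) P := (integrable_const 1).indicator ht'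
  have hmul : Integrable ((t.indicator fun _ => (1 : ℝ)) * P[χs | m]) P :=
    integrable_condExp.bdd_mul (c := 1) hti.aestronglyMeasurable
      (Eventually.of_forall fun ω => by by_cases hω : ω ∈ t <;> simp [hω])
  have hprod := (condIndep_iff m m₂ m₁ hm h₂ h₁ P).1 hind.symm t s ht hs
  calc ∫ ω in a ∩ t, P[χs | m] ω ∂P
      = ∫ ω in a, ((t.indicator fun _ => (1 : ℝ)) * P[χs | m]) ω ∂P := by
        rw [← setIntegral_indicator ht']
        congr 1; ext ω; by_cases hω : ω ∈ t <;> simp [hω]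
    _ = ∫ ω in a, P[(t.indicator fun _ => (1 : ℝ)) * P[χs | m] | m] ω ∂P :=
        (setIntegral_condExp hm hmul ha).symm
    _ = ∫ ω in a, (P⟦t ∩ s | m⟧) ω ∂P := by
        refine setIntegral_congr_ae (hm _ ha) ?_
        filter_upwards [condExp_mul_of_stronglyMeasurable_right stronglyMeasurable_condExp hmul hti,
          hprod] with ω hpull hω _
        rw [hpull, hω]
    _ = ∫ ω in a, (t ∩ s).indicator (fun _ => (1 : ℝ)) ω ∂P :=
        setIntegral_condExp hm ((integrable_const 1).indicator (ht'.inter (h₁ _ hs))) ha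
    _ = ∫ ω in a ∩ t, χs ω ∂P := by rw [← setIntegral_indicator ht', indicator_indicator]

lemma condIndep_iff_forall_condExp_indicator_sup_ae_eq (hm : m ≤ mΩ) (h₁ : m₁ ≤ mΩ)
    (h₂ : m₂ ≤ mΩ) :
    CondIndep m m₁ m₂ hm P ↔ ∀ t, MeasurableSet[m₂] t → P⟦t | m ⊔ m₁⟧ =ᵐ[P] P⟦t | m⟧ :=
  ⟨fun h _ ht => CondIndep.condExp_indicator_sup_ae_eq (CondIndep.symm h) h₂ h₁ ht, fun h =>
    (condIndep_of_condExp_indicator_sup_ae_eq hm h₂ h₁ (@isPiSystem_measurableSet Ω m₂)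
      (@generateFrom_measurableSet Ω m₂).symm h).symm⟩

lemma CondIndep.weak_union {hm : m ≤ mΩ} (h : CondIndep m m₁ m₂ hm P) (h₁ : m₁ ≤ mΩ)
    (h₂ : m₂ ≤ mΩ) (hmm' : m ≤ m') (hm' : m' ≤ m ⊔ m₁) :
    CondIndep m' m₁ m₂ (hm'.trans (sup_le hm h₁)) P := by
  rw [condIndep_iff_forall_condExp_indicator_sup_ae_eq hm h₁ h₂] at h
  rw [condIndep_iff_forall_condExp_indicator_sup_ae_eq _ h₁ h₂]
  intro t ht
  rw [show m' ⊔ m₁ = m ⊔ m₁ from le_antisymm (sup_le hm' le_sup_right) (sup_le_sup_right hmm' _)]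
  exact (h t ht).trans (condExp_ae_eq_of_le_of_le hmm' hm' (sup_le hm h₁) (h t ht)).symm

lemma CondIndep.contraction {hm : m ≤ mΩ} {m₁' : MeasurableSpace Ω} (h₁ : m₁ ≤ mΩ)
    (h₁' : m₁' ≤ mΩ) (h₂ : m₂ ≤ mΩ) (h : CondIndep m m₁ m₂ hm P)
    (h' : CondIndep (m ⊔ m₁) m₁' m₂ (sup_le hm h₁) P) :
    CondIndep m (m₁ ⊔ m₁') m₂ hm P := by
  rw [condIndep_iff_forall_condExp_indicator_sup_ae_eq hm h₁ h₂] at h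
  rw [condIndep_iff_forall_condExp_indicator_sup_ae_eq _ h₁' h₂] at h'
  rw [condIndep_iff_forall_condExp_indicator_sup_ae_eq hm (sup_le h₁ h₁') h₂]
  intro t ht
  rw [← sup_assoc]
  exact (h' t ht).trans (h t ht)

end CondIndep

section Responses

variable {Ω : Type*} {q : ℕ}

/-- `sigmaPast` indexed by `ℕ`, for induction: `sigmaPast Y i = sigmaFirst Y i` by definition. -/
def sigmaFirst (Y : Fin q → Ω → ℝ) (n : ℕ) : MeasurableSpace Ω :=
  ⨆ j : Fin q, ⨆ _ : (j : ℕ) < n, MeasurableSpace.comap (Y j) inferInstance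

variable {m mZ mΩ : MeasurableSpace Ω} {P : Measure Ω} {Y : Fin q → Ω → ℝ}

lemma sigmaFirst_zero : sigmaFirst Y 0 = ⊥ := by simp [sigmaFirst]

lemma sigmaFirst_succ {n : ℕ} (hn : n < q) :
    sigmaFirst Y (n + 1) = sigmaFirst Y n ⊔ MeasurableSpace.comap (Y ⟨n, hn⟩) inferInstance := by
  refine le_antisymm (iSup₂_le fun j hj => ?_) (sup_le (iSup₂_le fun j hj => ?_) ?_)
  · rcases (Nat.lt_succ_iff_lt_or_eq.1 hj) with hj | hj
    · exact le_sup_of_le_left (le_iSup₂_of_le j hj le_rfl)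
    · obtain rfl : j = ⟨n, hn⟩ := Fin.ext hj
      exact le_sup_right
  · exact le_iSup₂_of_le j (hj.trans n.lt_succ_self) le_rfl
  · exact le_iSup₂_of_le (⟨n, hn⟩ : Fin q) n.lt_succ_self le_rfl

lemma sigmaFirst_le (hY : ∀ i, Measurable (Y i)) (n : ℕ) : sigmaFirst Y n ≤ mΩ :=
  iSup₂_le fun j _ => (hY j).comap_le

lemma comap_pi_le_sigmaFirst :
    MeasurableSpace.comap (fun ω i => Y i ω) MeasurableSpace.pi ≤ sigmaFirst Y q := by
  simp_rw [MeasurableSpace.pi, MeasurableSpace.comap_iSup, MeasurableSpace.comap_comp]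
  exact iSup_le fun j => le_iSup₂_of_le j j.isLt le_rfl

lemma comap_eq_generateFrom_preimage_Ici (W : Ω → ℝ) :
    MeasurableSpace.comap W inferInstance = generateFrom {s | ∃ t ∈ range Ici, W ⁻¹' t = s} := by
  rw [show (inferInstance : MeasurableSpace ℝ) = generateFrom (range Ici) from
    borel_eq_generateFrom_Ici ℝ, comap_generateFrom]
  rfl

variable [StandardBorelSpace Ω] [IsFiniteMeasure P]

lemma condIndep_sigmaFirst (hm : m ≤ mΩ) (hZ : mZ ≤ mΩ) (hY : ∀ i, Measurable (Y i))
    (h : ∀ i y, P⟦{ω | y ≤ Y i ω} | m ⊔ mZ ⊔ sigmaPast Y i⟧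
      =ᵐ[P] P⟦{ω | y ≤ Y i ω} | m ⊔ sigmaPast Y i⟧) :
    ∀ n ≤ q, CondIndep m (sigmaFirst Y n) mZ hm P := by
  intro n
  induction n with
  | zero => intro _; rw [sigmaFirst_zero]; exact condIndep_bot_left _
  | succ n ih =>
    intro hn
    have hstep : CondIndep (m ⊔ sigmaFirst Y n) (MeasurableSpace.comap (Y ⟨n, hn⟩) inferInstance)
        mZ (sup_le hm (sigmaFirst_le hY n)) P := by
      refine condIndep_of_condExp_indicator_sup_ae_eq _ (hY _).comap_le hZ (isPiSystem_Ici.comap _)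
        (comap_eq_generateFrom_preimage_Ici _) ?_
      rintro _ ⟨_, ⟨y, rfl⟩, rfl⟩
      rw [sup_right_comm]
      exact h ⟨n, hn⟩ y
    rw [sigmaFirst_succ hn]
    exact CondIndep.contraction (sigmaFirst_le hY n) (hY _).comap_le hZ (ih (Nat.le_of_succ_le hn))
      hstep

lemma condIndep_iff_forall_perm_condExp_ae_eq (hm : m ≤ mΩ) (hZ : mZ ≤ mΩ)
    (hY : ∀ i, Measurable (Y i)) :
    CondIndep m (MeasurableSpace.comap (fun ω i => Y i ω) MeasurableSpace.pi) mZ hm P ↔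
      ∀ (σ : Equiv.Perm (Fin q)) i y,
        P⟦{ω | y ≤ Y (σ i) ω} | m ⊔ mZ ⊔ sigmaPast (fun j => Y (σ j)) i⟧
          =ᵐ[P] P⟦{ω | y ≤ Y (σ i) ω} | m ⊔ sigmaPast (fun j => Y (σ j)) i⟧ := by
  have hYle : MeasurableSpace.comap (fun ω i => Y i ω) MeasurableSpace.pi ≤ mΩ :=
    (measurable_pi_lambda _ hY).comap_le
  refine ⟨fun h σ i y => ?_, fun h =>
    condIndep_of_condIndep_of_le_left (condIndep_sigmaFirst hm hZ hY (h 1) q le_rfl)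
      comap_pi_le_sigmaFirst⟩
  have hpast : sigmaPast (fun j => Y (σ j)) i
      ≤ MeasurableSpace.comap (fun ω i => Y i ω) MeasurableSpace.pi :=
    iSup₂_le fun j _ => comap_le_comap_pi (σ j)
  rw [sup_right_comm m mZ]
  exact CondIndep.condExp_indicator_sup_ae_eq
    (CondIndep.weak_union h hYle hZ le_sup_left (sup_le_sup_left hpast m))
    hYle hZ (comap_le_comap_pi (σ i) _ ⟨Ici y, measurableSet_Ici, rfl⟩)

end Responses

section InformationGain

variable {Ω α β : Type*} {mΩ : MeasurableSpace Ω} [MeasurableSpace α] [MeasurableSpace β]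
  {P : Measure Ω} [IsProbabilityMeasure P] {q : ℕ} {V : Fin q → Ω → ℝ}

lemma sum_xiSigma_sigmaPast_lt (hV : ∀ i, Measurable (V i)) (hq : 0 < q) :
    ∑ i, xiSigma (sigmaPast V i) P (V i) < q := by
  have h0 : sigmaPast V ⟨0, hq⟩ = ⊥ := by simp [sigmaPast, Fin.lt_def]
  calc ∑ i, xiSigma (sigmaPast V i) P (V i) < ∑ _i : Fin q, (1 : ℝ) :=
        Finset.sum_lt_sum (fun i _ => xiSigma_le_one_s15 (hV i) (sigmaFirst_le hV i))
          ⟨⟨0, hq⟩, Finset.mem_univ _, by rw [h0, xiSigma_bot (hV _)]; exact one_pos⟩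
    _ = q := by simp

lemma T_le_and_eq_iff {X : Ω → α} {X' : Ω → β} (hV : ∀ i, Measurable (V i))
    (hnd : ∀ i, Nondegenerate P (V i)) (hX' : Measurable X')
    (hXX' : MeasurableSpace.comap X inferInstance ≤ MeasurableSpace.comap X' inferInstance) :
    T P V X ≤ T P V X' ∧ (T P V X = T P V X' ↔ ∀ i y,
      P⟦{ω | y ≤ V i ω} | MeasurableSpace.comap X' inferInstance ⊔ sigmaPast V i⟧
        =ᵐ[P] P⟦{ω | y ≤ V i ω} | MeasurableSpace.comap X inferInstance ⊔ sigmaPast V i⟧) := by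
  rcases Nat.eq_zero_or_pos q with rfl | hq
  · simp [T]
  have hle : ∀ i, MeasurableSpace.comap X inferInstance ⊔ sigmaPast V i
      ≤ MeasurableSpace.comap X' inferInstance ⊔ sigmaPast V i := fun i => sup_le_sup_right hXX' _
  have hle' : ∀ i, MeasurableSpace.comap X' inferInstance ⊔ sigmaPast V i ≤ mΩ :=
    fun i => sup_le hX'.comap_le (sigmaFirst_le hV i)
  have hξ : ∀ i ∈ Finset.univ, xiSigma (MeasurableSpace.comap X inferInstance ⊔ sigmaPast V i) P
      (V i) ≤ xiSigma (MeasurableSpace.comap X' inferInstance ⊔ sigmaPast V i) P (V i) :=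
    fun i _ => xiSigma_mono_s15 (hV i) (hle i) (hle' i)
  have hden : 0 < (q : ℝ) - ∑ i, xiSigma (sigmaPast V i) P (V i) :=
    sub_pos.2 (sum_xiSigma_sigmaPast_lt hV hq)
  have hT : StrictMono fun s : ℝ =>
      1 - ((q : ℝ) - s) / ((q : ℝ) - ∑ i, xiSigma (sigmaPast V i) P (V i)) :=
    fun a b hab => by
      have := div_lt_div_of_pos_right (sub_lt_sub_left hab (q : ℝ)) hden
      linarith
  refine ⟨hT.monotone (Finset.sum_le_sum hξ), ?_⟩
  refine (hT.injective.eq_iff.trans (Finset.sum_eq_sum_iff_of_le hξ)).trans ?_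
  simp only [Finset.mem_univ, forall_const]
  exact forall_congr' fun i =>
    eq_comm.trans (xiSigma_eq_iff (hV i) (hnd i) (hle i) (hle' i))

lemma Tbar_le_and_eq_iff {X : Ω → α} {X' : Ω → β} {Y : Fin q → Ω → ℝ}
    (hY : ∀ i, Measurable (Y i)) (hnd : ∀ i, Nondegenerate P (Y i)) (hX' : Measurable X')
    (hXX' : MeasurableSpace.comap X inferInstance ≤ MeasurableSpace.comap X' inferInstance) :
    Tbar P Y X ≤ Tbar P Y X' ∧ (Tbar P Y X = Tbar P Y X' ↔ ∀ (σ : Equiv.Perm (Fin q)) i y,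
      P⟦{ω | y ≤ Y (σ i) ω} | MeasurableSpace.comap X' inferInstance
          ⊔ sigmaPast (fun j => Y (σ j)) i⟧
        =ᵐ[P] P⟦{ω | y ≤ Y (σ i) ω} | MeasurableSpace.comap X inferInstance
          ⊔ sigmaPast (fun j => Y (σ j)) i⟧) := by
  have hT := fun σ : Equiv.Perm (Fin q) =>
    T_le_and_eq_iff (V := fun i => Y (σ i)) (fun i => hY _) (fun i => hnd _) hX' hXX'
  have hc : (0 : ℝ) < 1 / (Nat.factorial q : ℝ) := by positivity
  refine ⟨mul_le_mul_of_nonneg_left (Finset.sum_le_sum fun σ _ => (hT σ).1) hc.le, ?_⟩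
  rw [Tbar, Tbar, mul_right_inj' hc.ne', Finset.sum_eq_sum_iff_of_le fun σ _ => (hT σ).1]
  simp only [Finset.mem_univ, forall_const]
  exact forall_congr' fun σ => (hT σ).2

end InformationGain

theorem Tbar_information_gain_and_conditional_independence_general
    {Ω : Type*} [MeasurableSpace Ω] [StandardBorelSpace Ω]
    (P : Measure Ω) [IsProbabilityMeasure P]
    {p q r : ℕ} (X : Ω → (Fin p → ℝ)) (Z : Ω → (Fin r → ℝ)) (Y : Fin q → Ω → ℝ)
    (hX : Measurable X) (hZ : Measurable Z) (hY : ∀ i, Measurable (Y i))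
    (hnd : ∀ i, Nondegenerate P (Y i)) :
    Tbar P Y X ≤ Tbar P Y (fun ω => (X ω, Z ω)) ∧
    (Tbar P Y X = Tbar P Y (fun ω => (X ω, Z ω)) ↔
      CondIndepFun (MeasurableSpace.comap X inferInstance) hX.comap_le
        (fun ω => fun i => Y i ω) Z P) := by
  have hXZ : MeasurableSpace.comap (fun ω => (X ω, Z ω)) inferInstance
      = MeasurableSpace.comap X inferInstance ⊔ MeasurableSpace.comap Z inferInstance :=
    MeasurableSpace.comap_prodMk X Z
  obtain ⟨hle, hiff⟩ := Tbar_le_and_eq_iff hY hnd (hX.prodMk hZ) (hXZ ▸ le_sup_left)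
  refine ⟨hle, hiff.trans ?_⟩
  rw [hXZ, condIndepFun_iff_condIndep,
    condIndep_iff_forall_perm_condExp_ae_eq hX.comap_le hZ.comap_le hY]

theorem Tbar_information_gain_and_conditional_independence
    {Ω : Type*} [MeasurableSpace Ω] [StandardBorelSpace Ω] [Nonempty Ω]
    (P : Measure Ω) [IsProbabilityMeasure P]
    {p q r : ℕ} (X : Ω → (Fin p → ℝ)) (Z : Ω → (Fin r → ℝ)) (Y : Fin q → Ω → ℝ)
    (hX : Measurable X) (hZ : Measurable Z) (hY : ∀ i, Measurable (Y i))
    (hnd : ∀ i, Nondegenerate P (Y i)) :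
    Tbar P Y X ≤ Tbar P Y (fun ω => (X ω, Z ω)) ∧
    (Tbar P Y X = Tbar P Y (fun ω => (X ω, Z ω)) ↔
      CondIndepFun (MeasurableSpace.comap X inferInstance) hX.comap_le
        (fun ω => fun i => Y i ω) Z P) :=
  Tbar_information_gain_and_conditional_independence_general P X Z Y hX hZ hY hnd
end

section
/- Invariance under (strictly increasing) bijective transformations: let X be an ℝ^p-valued random vector and Y = (Y_1,…,Y_q) an ℝ^q-valued random vector with non-degenerate components, all defined on a common probability space. Let g = (g_1,…,g_q) be a vector of strictly increasing bijections g_i : ℝ → ℝ and let h : ℝ^p → ℝ^p be a bijective, bimeasurable transformation (measurable with measurable inverse). Then T(g(Y) | h(X)) = T(Y|X), where g(Y) := (g_1(Y_1),…,g_q(Y_q)). -/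
open MeasureTheory ProbabilityTheory

lemma comap_measEquiv_comp {Ω α β : Type*} [MeasurableSpace α] [MeasurableSpace β]
    (e : α ≃ᵐ β) (X : Ω → α) :
    MeasurableSpace.comap (fun ω => e (X ω)) inferInstance
      = MeasurableSpace.comap X inferInstance := by
  rw [show (fun ω => e (X ω)) = e ∘ X from rfl, ← MeasurableSpace.comap_comp,
    e.measurableEmbedding.comap_eq]

noncomputable def strictMonoEquiv (g : ℝ → ℝ) (hm : StrictMono g)
    (hb : Function.Bijective g) : ℝ ≃ᵐ ℝ :=
  (StrictMono.orderIsoOfSurjective g hm hb.2).toHomeomorph.toMeasurableEquiv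

lemma xiSigma_comp {Ω : Type*} {inst : MeasurableSpace Ω} (P : Measure Ω)
    (Y : Ω → ℝ) (hY : Measurable Y)
    (g : ℝ → ℝ) (hm : StrictMono g) (hb : Function.Bijective g)
    (m : MeasurableSpace Ω) :
    @xiSigma Ω m inst P (fun ω => g (Y ω)) = @xiSigma Ω m inst P Y := by
  set e := strictMonoEquiv g hm hb
  have hmap : @Measure.map Ω ℝ inst _ (fun ω => g (Y ω)) P
      = Measure.map e (@Measure.map Ω ℝ inst _ Y P) := by
    rw [Measure.map_map e.measurable hY]; rfl
  unfold xiSigma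
  rw [hmap, e.measurableEmbedding.integral_map, e.measurableEmbedding.integral_map]
  have hset : ∀ y : ℝ, {ω | e y ≤ g (Y ω)} = {ω | y ≤ Y ω} := by
    intro y
    ext ω
    exact hm.le_iff_le
  simp only [hset]

theorem T_invariance_under_bijective_transformations
    {Ω : Type*} [MeasurableSpace Ω] (P : Measure Ω) [IsProbabilityMeasure P]
    {p q : ℕ} (X : Ω → (Fin p → ℝ)) (Y : Fin q → Ω → ℝ)
    (hX : Measurable X) (hY : ∀ i, Measurable (Y i))
    (hnd : ∀ i, Nondegenerate P (Y i))
    (g : Fin q → ℝ → ℝ) (hgmono : ∀ i, StrictMono (g i))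
    (hgbij : ∀ i, Function.Bijective (g i))
    (h : (Fin p → ℝ) ≃ᵐ (Fin p → ℝ)) :
    T P (fun i => fun ω => g i (Y i ω)) (fun ω => h (X ω)) = T P Y X := by
  have hsp : ∀ i, sigmaPast (fun i ω => g i (Y i ω)) i = sigmaPast Y i := by
    intro i
    unfold sigmaPast
    exact iSup_congr fun j => iSup_congr fun _ =>
      comap_measEquiv_comp (strictMonoEquiv (g j) (hgmono j) (hgbij j)) (Y j)
  have hc : MeasurableSpace.comap (fun ω => h (X ω)) inferInstance
      = MeasurableSpace.comap X inferInstance := comap_measEquiv_comp h X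
  have h1 : ∀ i : Fin q,
      xiSigma (MeasurableSpace.comap (fun ω => h (X ω)) inferInstance
        ⊔ sigmaPast (fun i ω => g i (Y i ω)) i) P (fun ω => g i (Y i ω))
      = xiSigma (MeasurableSpace.comap X inferInstance ⊔ sigmaPast Y i) P (Y i) := by
    intro i
    rw [hc, hsp i]
    exact xiSigma_comp P (Y i) (hY i) (g i) (hgmono i) (hgbij i) _
  have h2 : ∀ i : Fin q,
      xiSigma (sigmaPast (fun i ω => g i (Y i ω)) i) P (fun ω => g i (Y i ω))
      = xiSigma (sigmaPast Y i) P (Y i) := by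
    intro i
    rw [hsp i]
    exact xiSigma_comp P (Y i) (hY i) (g i) (hgmono i) (hgbij i) _
  unfold T
  rw [Finset.sum_congr rfl fun i _ => h1 i, Finset.sum_congr rfl fun i _ => h2 i]
end

section
/- Invariance under exchangeability: let X be an ℝ^p-valued random vector and Y = (Y_1,…,Y_q) an ℝ^q-valued random vector with non-degenerate components, all defined on a common probability space, and assume the combined random vector (X,Y) ∈ ℝ^{p+q} is exchangeable, i.e., its distribution is invariant under every permutation of its p+q components. Then T(Y_σ|X) = T(Y|X) for every permutation σ of {1,…,q}, where Y_σ := (Y_{σ(1)},…,Y_{σ(q)}). -/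
open MeasureTheory ProbabilityTheory

/-!
Each summand `ξ(Y_i | X, Y_1, …, Y_{i-1})` of `T` is a functional of the joint law of
`((X, Y_1, …, Y_{i-1}), Y_i)` alone: the conditional probabilities `P(Y_i ≥ y | ·)` are given by
the regular conditional distribution of `Y_i`, which is the disintegration of that joint law.
Exchangeability gives `(X, Y_σ) ∼ (X, Y)`, hence `((X, Y_{σ(1)}, …, Y_{σ(i-1)}), Y_{σ(i)})` and
`((X, Y_1, …, Y_{i-1}), Y_i)` have the same law, and `T(Y_σ | X)`, `T(Y | X)` agree summand by
summand, in the numerator as well as in the denominator.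
-/

section LawInvariance

variable {Ω Ω' α : Type*} [MeasurableSpace Ω] [MeasurableSpace Ω'] [MeasurableSpace α]
  {P : Measure Ω} {P' : Measure Ω'}

lemma variance_indicator_le_eq_variance_map {Z : Ω → ℝ} (hZ : Measurable Z) (y : ℝ) :
    variance ({ω | y ≤ Z ω}.indicator fun _ => (1 : ℝ)) P
      = Var[(Set.Ici y).indicator 1; P.map Z] := by
  rw [variance_map (measurable_one.indicator measurableSet_Ici).aemeasurable hZ.aemeasurable]
  rfl

lemma variance_condExp_indicator_le_eq_variance_map [IsFiniteMeasure P] {W : Ω → α}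
    {Z : Ω → ℝ} (hW : Measurable W) (hZ : Measurable Z) (y : ℝ) :
    variance (P[{ω | y ≤ Z ω}.indicator fun _ => (1 : ℝ) | MeasurableSpace.comap W inferInstance]) P
      = Var[fun a => (condDistrib Z W P a).real (Set.Ici y); P.map W] := by
  refine (variance_congr (condDistrib_ae_eq_condExp hW hZ measurableSet_Ici).symm).trans ?_
  rw [variance_map (X := fun a => (condDistrib Z W P a).real (Set.Ici y)) ?_ hW.aemeasurable]
  · rfl
  · exact (Kernel.measurable_coe _ measurableSet_Ici).ennreal_toReal.aemeasurable

lemma ProbabilityTheory.IdentDistrib.condDistrib_eq [IsFiniteMeasure P] [IsFiniteMeasure P']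
    {W : Ω → α} {W' : Ω' → α} {Z : Ω → ℝ} {Z' : Ω' → ℝ}
    (h : IdentDistrib (fun ω => (W ω, Z ω)) (fun ω => (W' ω, Z' ω)) P P') :
    condDistrib Z W P = condDistrib Z' W' P' := by
  simp only [condDistrib_def, h.map_eq]

theorem ProbabilityTheory.IdentDistrib.xiSigma_comap_eq [IsFiniteMeasure P] [IsFiniteMeasure P']
    {W : Ω → α} {W' : Ω' → α} {Z : Ω → ℝ} {Z' : Ω' → ℝ}
    (hW : Measurable W) (hW' : Measurable W') (hZ : Measurable Z) (hZ' : Measurable Z')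
    (h : IdentDistrib (fun ω => (W ω, Z ω)) (fun ω => (W' ω, Z' ω)) P P') :
    xiSigma (MeasurableSpace.comap W inferInstance) P Z
      = xiSigma (MeasurableSpace.comap W' inferInstance) P' Z' := by
  have hmapW : P.map W = P'.map W' := (h.comp measurable_fst).map_eq
  have hmapZ : P.map Z = P'.map Z' := (h.comp measurable_snd).map_eq
  simp only [xiSigma, variance_condExp_indicator_le_eq_variance_map hW hZ,
    variance_condExp_indicator_le_eq_variance_map hW' hZ',
    variance_indicator_le_eq_variance_map hZ, variance_indicator_le_eq_variance_map hZ',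
    h.condDistrib_eq, hmapW, hmapZ]

end LawInvariance

lemma sigmaPast_eq_comap {Ω : Type*} {q : ℕ} (Y : Fin q → Ω → ℝ) (i : Fin q) :
    sigmaPast Y i = MeasurableSpace.comap (fun ω (j : {j // j < i}) => Y j ω) inferInstance := by
  rw [MeasurableSpace.comap_process_pi, sigmaPast, iSup_subtype]

lemma measurable_fin_append {β : Type*} [MeasurableSpace β] {p q : ℕ} :
    Measurable fun v : (Fin p → β) × (Fin q → β) => Fin.append v.1 v.2 := by
  refine measurable_pi_lambda _ fun k => Fin.addCases (fun k => ?_) (fun j => ?_) k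
  · simpa using measurable_fst.eval (a := k)
  · simpa using measurable_snd.eval (a := j)

section Exchangeable

variable {Ω α : Type*} [MeasurableSpace Ω] [MeasurableSpace α] {P : Measure Ω}
  {q : ℕ} {Y : Fin q → Ω → ℝ}

lemma identDistrib_prodMk_comp_perm_of_exchangeable {p : ℕ} {X : Ω → Fin p → ℝ}
    (hX : Measurable X) (hY : ∀ i, Measurable (Y i))
    (hexch : ∀ π : Equiv.Perm (Fin (p + q)),
      P.map (fun ω => (Fin.append (X ω) (fun j => Y j ω)) ∘ π) =
        P.map (fun ω => Fin.append (X ω) (fun j => Y j ω)))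
    (σ : Equiv.Perm (Fin q)) :
    IdentDistrib (fun ω => (X ω, fun j => Y (σ j) ω)) (fun ω => (X ω, fun j => Y j ω)) P P := by
  let π := finSumFinEquiv.permCongr (Equiv.sumCongr (Equiv.refl (Fin p)) σ)
  let split : (Fin (p + q) → ℝ) → (Fin p → ℝ) × (Fin q → ℝ) :=
    fun v => (fun k => v (Fin.castAdd q k), fun j => v (Fin.natAdd p j))
  have happend : Measurable fun ω => Fin.append (X ω) (fun j => Y j ω) :=
    measurable_fin_append.comp (hX.prodMk (measurable_pi_lambda _ hY))
  have hperm : IdentDistrib (fun ω => Fin.append (X ω) (fun j => Y j ω) ∘ π)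
      (fun ω => Fin.append (X ω) (fun j => Y j ω)) P P :=
    ⟨(by fun_prop : Measurable _).aemeasurable, happend.aemeasurable, hexch π⟩
  convert hperm.comp (u := split) (by fun_prop) using 1 <;>
    ext ω <;> simp [split, π, Equiv.permCongr_apply]

lemma xiSigma_sup_sigmaPast_comp_perm [IsFiniteMeasure P] {X : Ω → α} (hX : Measurable X)
    (hY : ∀ i, Measurable (Y i)) {σ : Equiv.Perm (Fin q)}
    (h : IdentDistrib (fun ω => (X ω, fun j => Y (σ j) ω)) (fun ω => (X ω, fun j => Y j ω)) P P)
    (i : Fin q) :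
    xiSigma (MeasurableSpace.comap X inferInstance ⊔ sigmaPast (fun j => Y (σ j)) i) P (Y (σ i))
      = xiSigma (MeasurableSpace.comap X inferInstance ⊔ sigmaPast Y i) P (Y i) := by
  let restrict : α × (Fin q → ℝ) → (α × ({j // j < i} → ℝ)) × ℝ :=
    fun v => ((v.1, fun j => v.2 j), v.2 i)
  rw [sigmaPast_eq_comap, sigmaPast_eq_comap, ← MeasurableSpace.comap_prodMk,
    ← MeasurableSpace.comap_prodMk]
  exact (h.comp (u := restrict) (by fun_prop)).xiSigma_comap_eq (by fun_prop) (by fun_prop)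
    (hY _) (hY _)

lemma xiSigma_sigmaPast_comp_perm [IsFiniteMeasure P] (hY : ∀ i, Measurable (Y i))
    {σ : Equiv.Perm (Fin q)}
    (h : IdentDistrib (fun ω j => Y (σ j) ω) (fun ω j => Y j ω) P P) (i : Fin q) :
    xiSigma (sigmaPast (fun j => Y (σ j)) i) P (Y (σ i)) = xiSigma (sigmaPast Y i) P (Y i) := by
  simpa only [MeasurableSpace.comap_const, bot_sup_eq] using
    xiSigma_sup_sigmaPast_comp_perm measurable_const hY
      (h.comp (u := fun y => ((), y)) (by fun_prop)) i

end Exchangeable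

theorem T_invariance_under_exchangeability_general
    {Ω : Type*} [MeasurableSpace Ω] (P : Measure Ω) [IsProbabilityMeasure P]
    {p q : ℕ} (X : Ω → (Fin p → ℝ)) (Y : Fin q → Ω → ℝ)
    (hX : Measurable X) (hY : ∀ i, Measurable (Y i))
    (hexch : ∀ π : Equiv.Perm (Fin (p + q)),
      P.map (fun ω => (Fin.append (X ω) (fun j => Y j ω)) ∘ π) =
        P.map (fun ω => Fin.append (X ω) (fun j => Y j ω))) :
    ∀ σ : Equiv.Perm (Fin q), T P (fun i => Y (σ i)) X = T P Y X := by
  intro σ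
  have hlaw := identDistrib_prodMk_comp_perm_of_exchangeable hX hY hexch σ
  simp only [T, xiSigma_sup_sigmaPast_comp_perm hX hY hlaw,
    xiSigma_sigmaPast_comp_perm hY (hlaw.comp measurable_snd)]

theorem T_invariance_under_exchangeability
    {Ω : Type*} [MeasurableSpace Ω] (P : Measure Ω) [IsProbabilityMeasure P]
    {p q : ℕ} (X : Ω → (Fin p → ℝ)) (Y : Fin q → Ω → ℝ)
    (hX : Measurable X) (hY : ∀ i, Measurable (Y i))
    (hnd : ∀ i, Nondegenerate P (Y i))
    (hexch : ∀ π : Equiv.Perm (Fin (p + q)),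
      P.map (fun ω => (Fin.append (X ω) (fun j => Y j ω)) ∘ π) =
        P.map (fun ω => Fin.append (X ω) (fun j => Y j ω))) :
    ∀ σ : Equiv.Perm (Fin q), T P (fun i => Y (σ i)) X = T P Y X :=
  T_invariance_under_exchangeability_general P X Y hX hY hexch
end
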